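/- arXiv:1005.4834 — 7 statements merged into one kernel-verified Lean document; each statement's English description precedes it below -/
import Mathlib

section
/- Let I be a finite nonempty index set. For each t in I let A_t be a nonconstant real polynomial with nonnegative coefficients, constant term 1, and no degree-1 term (every positive-degree monomial appearing in A_t has degree at least 2). Fix positive reals c_t for t in I and define f(z) = Σ_{t∈I} c_t · z A_t'(z) / A_t(z). Then f is strictly increasing on (0, ∞); that is, for all 0 < z_1 < z_2 one has f(z_1) < f(z_2). -/
open Polynomial Finset

lemma pow_cross {z₁ z₂ : ℝ} (h1 : 0 < z₁) (h12 : z₁ < z₂) {m n : ℕ} (hmn : m ≤ n) :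
    z₁ ^ n * z₂ ^ m ≤ z₁ ^ m * z₂ ^ n := by
  obtain ⟨k, rfl⟩ := Nat.exists_eq_add_of_le hmn
  rw [pow_add, pow_add]
  have h2 : (0:ℝ) < z₂ := h1.trans h12
  have hk : z₁ ^ k ≤ z₂ ^ k := pow_le_pow_left₀ h1.le h12.le k
  calc z₁ ^ m * z₁ ^ k * z₂ ^ m = z₁ ^ m * z₂ ^ m * z₁ ^ k := by ring
    _ ≤ z₁ ^ m * z₂ ^ m * z₂ ^ k := mul_le_mul_of_nonneg_left hk (by positivity)
    _ = z₁ ^ m * (z₂ ^ m * z₂ ^ k) := by ring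

lemma key_term_nonneg {z₁ z₂ : ℝ} (h1 : 0 < z₁) (h12 : z₁ < z₂) (m n : ℕ) :
    0 ≤ ((n:ℝ) - m) * (z₁ ^ m * z₂ ^ n - z₁ ^ n * z₂ ^ m) := by
  rcases le_total m n with h | h
  · have h2 := pow_cross h1 h12 h
    have h3 : (m:ℝ) ≤ n := Nat.cast_le.mpr h
    nlinarith
  · have h2 := pow_cross h1 h12 h
    have h3 : (n:ℝ) ≤ m := Nat.cast_le.mpr h
    nlinarith

lemma double_sum_lt (S : Finset ℕ) (a : ℕ → ℝ) (ha : ∀ n, 0 ≤ a n)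
    {z₁ z₂ : ℝ} (h1 : 0 < z₁) (h12 : z₁ < z₂) {d : ℕ}
    (h0S : 0 ∈ S) (hdS : d ∈ S) (hd : 0 < d) (ha0 : 0 < a 0) (had : 0 < a d) :
    ∑ m ∈ S, ∑ n ∈ S, ((m:ℝ) * a m * z₁ ^ m) * (a n * z₂ ^ n)
    < ∑ m ∈ S, ∑ n ∈ S, ((n:ℝ) * a n * z₂ ^ n) * (a m * z₁ ^ m) := by
  have hgnonneg : ∀ m n : ℕ,
      0 ≤ ((n:ℝ) - m) * (a m * a n) * (z₁ ^ m * z₂ ^ n - z₁ ^ n * z₂ ^ m) := by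
    intro m n
    nlinarith [mul_nonneg (mul_nonneg (ha m) (ha n)) (key_term_nonneg h1 h12 m n)]
  have h2D : (∑ m ∈ S, ∑ n ∈ S, ((n:ℝ) - m) * (a m * a n) * (z₁ ^ m * z₂ ^ n))
      + (∑ m ∈ S, ∑ n ∈ S, ((n:ℝ) - m) * (a m * a n) * (z₁ ^ m * z₂ ^ n))
      = ∑ m ∈ S, ∑ n ∈ S, ((n:ℝ) - m) * (a m * a n) * (z₁ ^ m * z₂ ^ n - z₁ ^ n * z₂ ^ m) := by
    nth_rewrite 2 [show (∑ m ∈ S, ∑ n ∈ S, ((n:ℝ) - m) * (a m * a n) * (z₁ ^ m * z₂ ^ n))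
        = ∑ m ∈ S, ∑ n ∈ S, ((m:ℝ) - n) * (a n * a m) * (z₁ ^ n * z₂ ^ m)
      from Finset.sum_comm]
    rw [← Finset.sum_add_distrib]
    refine Finset.sum_congr rfl fun m _ => ?_
    rw [← Finset.sum_add_distrib]
    exact Finset.sum_congr rfl fun n _ => by ring
  have hDpos : 0 < ∑ m ∈ S, ∑ n ∈ S, ((n:ℝ) - m) * (a m * a n) * (z₁ ^ m * z₂ ^ n) := by
    have hpos : 0 < ∑ m ∈ S, ∑ n ∈ S,
        ((n:ℝ) - m) * (a m * a n) * (z₁ ^ m * z₂ ^ n - z₁ ^ n * z₂ ^ m) := by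
      refine Finset.sum_pos' (fun m _ => Finset.sum_nonneg fun n _ => hgnonneg m n) ⟨0, h0S, ?_⟩
      refine Finset.sum_pos' (fun n _ => hgnonneg 0 n) ⟨d, hdS, ?_⟩
      have hzd : z₁ ^ d < z₂ ^ d := pow_lt_pow_left₀ h12 h1.le hd.ne'
      have hdc : (0:ℝ) < d := Nat.cast_pos.mpr hd
      simp only [Nat.cast_zero, sub_zero, pow_zero, one_mul, mul_one]
      exact mul_pos (mul_pos hdc (mul_pos ha0 had)) (sub_pos.mpr hzd)
    linarith
  have hsub : (∑ m ∈ S, ∑ n ∈ S, ((n:ℝ) * a n * z₂ ^ n) * (a m * z₁ ^ m))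
      - (∑ m ∈ S, ∑ n ∈ S, ((m:ℝ) * a m * z₁ ^ m) * (a n * z₂ ^ n))
      = ∑ m ∈ S, ∑ n ∈ S, ((n:ℝ) - m) * (a m * a n) * (z₁ ^ m * z₂ ^ n) := by
    rw [← Finset.sum_sub_distrib]
    refine Finset.sum_congr rfl fun m _ => ?_
    rw [← Finset.sum_sub_distrib]
    exact Finset.sum_congr rfl fun n _ => by ring
  linarith

lemma single_mono (A : ℝ[X]) (hnonneg : ∀ n, 0 ≤ A.coeff n) (hconst : A.coeff 0 = 1)
    (hd : 0 < A.natDegree) {z₁ z₂ : ℝ} (h1 : 0 < z₁) (h12 : z₁ < z₂) :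
    z₁ * (derivative A).eval z₁ / A.eval z₁ < z₂ * (derivative A).eval z₂ / A.eval z₂ := by
  have h2 : (0:ℝ) < z₂ := h1.trans h12
  have evalA : ∀ z : ℝ, A.eval z
      = ∑ n ∈ Finset.range (A.natDegree + 1), A.coeff n * z ^ n := fun z =>
    A.eval_eq_sum_range z
  have evalD : ∀ z : ℝ, z * (derivative A).eval z
      = ∑ n ∈ Finset.range (A.natDegree + 1), (n:ℝ) * A.coeff n * z ^ n := by
    intro z
    have hsum := Polynomial.sum_over_range (p := A)
      (f := fun n b => b * (n:ℝ) * z ^ (n - 1)) (fun n => by simp)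
    rw [derivative_eval, hsum, Finset.mul_sum]
    refine Finset.sum_congr rfl fun n _ => ?_
    cases n with
    | zero => simp
    | succ k => simp only [Nat.add_sub_cancel, pow_succ]; ring
  have posA : ∀ z : ℝ, 0 < z → 0 < A.eval z := by
    intro z hz
    rw [evalA]
    refine Finset.sum_pos' (fun n _ => mul_nonneg (hnonneg n) (pow_nonneg hz.le n)) ⟨0, ?_, ?_⟩
    · simp
    · simp [hconst]
  have hA0 : A ≠ 0 := fun h => by simp [h] at hconst
  have had : 0 < A.coeff A.natDegree := by
    have h := Polynomial.leadingCoeff_ne_zero.mpr hA0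
    rw [Polynomial.leadingCoeff] at h
    exact (hnonneg _).lt_of_ne' h
  rw [div_lt_div_iff₀ (posA z₁ h1) (posA z₂ h2), evalD z₁, evalD z₂, evalA z₁, evalA z₂,
    Finset.sum_mul_sum, Finset.sum_mul_sum]
  rw [show (∑ n ∈ Finset.range (A.natDegree + 1), ∑ m ∈ Finset.range (A.natDegree + 1),
        ((n:ℝ) * A.coeff n * z₂ ^ n) * (A.coeff m * z₁ ^ m))
      = ∑ m ∈ Finset.range (A.natDegree + 1), ∑ n ∈ Finset.range (A.natDegree + 1),
        ((n:ℝ) * A.coeff n * z₂ ^ n) * (A.coeff m * z₁ ^ m)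
    from Finset.sum_comm]
  exact double_sum_lt _ A.coeff hnonneg h1 h12 (by simp) (by simp) hd
    (by rw [hconst]; norm_num) had

/-- `specF A c z = Σ_t c_t · z A_t'(z) / A_t(z)`. -/
noncomputable def specF {I : Type*} [Fintype I] (A : I → Polynomial ℝ) (c : I → ℝ)
    (z : ℝ) : ℝ :=
  ∑ t, c t * (z * (Polynomial.derivative (A t)).eval z / (A t).eval z)

/-- `f` is strictly increasing on `(0, ∞)`. -/
theorem specF_strictMono {I : Type*} [Fintype I] [Nonempty I]
    (A : I → Polynomial ℝ) (c : I → ℝ)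
    (hnonconst : ∀ t, 0 < (A t).natDegree)
    (hnonneg : ∀ t n, 0 ≤ (A t).coeff n)
    (hconst : ∀ t, (A t).coeff 0 = 1)
    (hdeg1 : ∀ t, (A t).coeff 1 = 0)
    (hc : ∀ t, 0 < c t) :
    ∀ z₁ z₂ : ℝ, 0 < z₁ → z₁ < z₂ → specF A c z₁ < specF A c z₂ := by
  intro z₁ z₂ h1 h12
  unfold specF
  refine Finset.sum_lt_sum_of_nonempty Finset.univ_nonempty fun t _ => ?_
  have := single_mono (A t) (hnonneg t) (hconst t) (hnonconst t) h1 h12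
  rw [mul_div_assoc, mul_div_assoc] at this ⊢
  · exact mul_lt_mul_of_pos_left this (hc t)
end

section
/- Let I be a finite nonempty index set. For each t in I let A_t be a nonconstant real polynomial with nonnegative coefficients, constant term 1, and no degree-1 term, and let c_t > 0. Define f(z) = Σ_{t∈I} c_t · z A_t'(z) / A_t(z) and M = Σ_{t∈I} c_t · deg(A_t). Then f restricted to [0, ∞) is a continuous, strictly increasing bijection from [0, ∞) onto [0, M); in particular f has a well-defined inverse f^{-1} : [0, M) → [0, ∞). -/
open Polynomial Finset Filter

lemma evalD_sum (A : Polynomial ℝ) (z : ℝ) :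
    z * (derivative A).eval z
      = ∑ n ∈ range (A.natDegree + 1), (n : ℝ) * A.coeff n * z ^ n := by
  have hlt : (derivative A).natDegree < A.natDegree + 1 :=
    lt_of_le_of_lt (natDegree_derivative_le A) (by omega)
  rw [eval_eq_sum_range' hlt z, Finset.mul_sum, Finset.sum_range_succ,
    Finset.sum_range_succ']
  have h0 : (derivative A).coeff A.natDegree = 0 := by
    rw [coeff_derivative, A.coeff_natDegree_succ_eq_zero, zero_mul]
  rw [h0]
  simp only [mul_zero, zero_mul, add_zero, Nat.cast_zero, pow_zero]
  refine Finset.sum_congr rfl fun n _ => ?_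
  rw [coeff_derivative]
  push_cast
  ring

lemma evalA_pos (A : Polynomial ℝ) (hnonneg : ∀ n, 0 ≤ A.coeff n)
    (hconst : A.coeff 0 = 1) {z : ℝ} (hz : 0 ≤ z) : 0 < A.eval z := by
  rw [A.eval_eq_sum_range z]
  have h1 : (1 : ℝ) ≤ ∑ n ∈ range (A.natDegree + 1), A.coeff n * z ^ n := by
    have := Finset.single_le_sum (f := fun n => A.coeff n * z ^ n)
      (s := range (A.natDegree + 1))
      (fun n _ => mul_nonneg (hnonneg n) (pow_nonneg hz n))
      (Finset.mem_range.2 (Nat.succ_pos A.natDegree))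
    simpa [hconst] using this
  linarith

lemma evalD_nonneg (A : Polynomial ℝ) (hnonneg : ∀ n, 0 ≤ A.coeff n)
    {z : ℝ} (hz : 0 ≤ z) : 0 ≤ z * (derivative A).eval z := by
  rw [evalD_sum]
  exact Finset.sum_nonneg fun n _ =>
    mul_nonneg (mul_nonneg (Nat.cast_nonneg n) (hnonneg n)) (pow_nonneg hz n)

lemma pow_cross_s4 {x y : ℝ} (hx : 0 ≤ x) (hxy : x ≤ y) (n m : ℕ) :
    0 ≤ ((n : ℝ) - m) * (y ^ n * x ^ m - x ^ n * y ^ m) := by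
  have hy : 0 ≤ y := hx.trans hxy
  rcases le_total n m with h | h
  · obtain ⟨k, rfl⟩ := Nat.exists_eq_add_of_le h
    have hk : x ^ k ≤ y ^ k := pow_le_pow_left₀ hx hxy k
    have hxy' : 0 ≤ x ^ n * y ^ n := mul_nonneg (pow_nonneg hx n) (pow_nonneg hy n)
    have h1 : (0:ℝ) ≤ (k : ℝ) * (x ^ n * y ^ n * (y ^ k - x ^ k)) :=
      mul_nonneg (Nat.cast_nonneg k) (mul_nonneg hxy' (by linarith))
    push_cast
    rw [pow_add, pow_add]
    nlinarith [h1]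
  · obtain ⟨k, rfl⟩ := Nat.exists_eq_add_of_le h
    have hk : x ^ k ≤ y ^ k := pow_le_pow_left₀ hx hxy k
    have hxy' : 0 ≤ x ^ m * y ^ m := mul_nonneg (pow_nonneg hx m) (pow_nonneg hy m)
    have h1 : (0:ℝ) ≤ (k : ℝ) * (x ^ m * y ^ m * (y ^ k - x ^ k)) :=
      mul_nonneg (Nat.cast_nonneg k) (mul_nonneg hxy' (by linarith))
    push_cast
    rw [pow_add, pow_add]
    nlinarith [h1]

lemma leading_pos (A : Polynomial ℝ) (hnonneg : ∀ n, 0 ≤ A.coeff n)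
    (hconst : A.coeff 0 = 1) : 0 < A.coeff A.natDegree := by
  rcases (hnonneg A.natDegree).lt_or_eq with h | h
  · exact h
  · exfalso
    have hne : A ≠ 0 := fun h0 => by simp [h0] at hconst
    exact (mt leadingCoeff_eq_zero.1 hne) h.symm

/-- The key cross-multiplied strict inequality. -/
lemma key_lt (A : Polynomial ℝ) (hd : 0 < A.natDegree)
    (hnonneg : ∀ n, 0 ≤ A.coeff n) (hconst : A.coeff 0 = 1)
    {x y : ℝ} (hx : 0 ≤ x) (hxy : x < y) :
    x * (derivative A).eval x * A.eval y < y * (derivative A).eval y * A.eval x := by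
  set N := A.natDegree + 1 with hN
  set a : ℕ → ℝ := fun n => A.coeff n with ha
  have hL : x * (derivative A).eval x * A.eval y
      = ∑ p ∈ range N ×ˢ range N, (p.1 : ℝ) * a p.1 * x ^ p.1 * (a p.2 * y ^ p.2) := by
    rw [evalD_sum, A.eval_eq_sum_range y, Finset.sum_mul_sum, Finset.sum_product]
  have hR : y * (derivative A).eval y * A.eval x
      = ∑ p ∈ range N ×ˢ range N, (p.1 : ℝ) * a p.1 * y ^ p.1 * (a p.2 * x ^ p.2) := by
    rw [evalD_sum, A.eval_eq_sum_range x, Finset.sum_mul_sum, Finset.sum_product]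
  rw [hL, hR, ← sub_pos, ← Finset.sum_sub_distrib]
  set F : ℕ × ℕ → ℝ := fun p =>
    (p.1 : ℝ) * a p.1 * y ^ p.1 * (a p.2 * x ^ p.2)
      - (p.1 : ℝ) * a p.1 * x ^ p.1 * (a p.2 * y ^ p.2) with hF
  set G : ℕ × ℕ → ℝ := fun p =>
    ((p.1 : ℝ) - p.2) * (y ^ p.1 * x ^ p.2 - x ^ p.1 * y ^ p.2) * (a p.1 * a p.2) with hG
  have hswap : ∑ p ∈ range N ×ˢ range N, F p
      = ∑ p ∈ range N ×ˢ range N, F p.swap := by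
    apply Finset.sum_nbij' (fun p => p.swap) (fun p => p.swap) <;>
      simp [Finset.mem_product, and_comm]
  have h2 : 2 * ∑ p ∈ range N ×ˢ range N, F p
      = ∑ p ∈ range N ×ˢ range N, G p := by
    rw [two_mul]
    nth_rewrite 2 [hswap]
    rw [← Finset.sum_add_distrib]
    refine Finset.sum_congr rfl fun p _ => ?_
    simp only [hF, hG, Prod.fst_swap, Prod.snd_swap]
    ring
  have hmem : (A.natDegree, 0) ∈ range N ×ˢ range N := by
    simp [hN, Finset.mem_product]
  have hGd : 0 < G (A.natDegree, 0) := by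
    have hlc : 0 < a A.natDegree := leading_pos A hnonneg hconst
    have hpow : x ^ A.natDegree < y ^ A.natDegree := pow_lt_pow_left₀ hxy hx hd.ne'
    have hdc : (0 : ℝ) < (A.natDegree : ℝ) := by exact_mod_cast hd
    have hc0 : a 0 = 1 := hconst
    simp only [hG, hc0, Nat.cast_zero, pow_zero, sub_zero, mul_one]
    exact mul_pos (mul_pos hdc (by linarith)) hlc
  have hsum : 0 < ∑ p ∈ range N ×ˢ range N, G p := by
    have := Finset.sum_lt_sum (f := fun _ : ℕ × ℕ => (0 : ℝ)) (g := G)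
      (fun p hp => mul_nonneg (pow_cross_s4 hx hxy.le p.1 p.2)
        (mul_nonneg (hnonneg p.1) (hnonneg p.2)))
      ⟨(A.natDegree, 0), hmem, hGd⟩
    simpa using this
  linarith

lemma gA_tendsto (A : Polynomial ℝ) (hd : 0 < A.natDegree)
    (hnonneg : ∀ n, 0 ≤ A.coeff n) (hconst : A.coeff 0 = 1) :
    Tendsto (fun z => z * (derivative A).eval z / A.eval z) atTop
      (nhds (A.natDegree : ℝ)) := by
  have hlc : 0 < A.coeff A.natDegree := leading_pos A hnonneg hconst
  have hA0 : A ≠ 0 := fun h0 => by simp [h0] at hconst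
  have hcast : ((A.natDegree - 1 : ℕ) : ℝ) + 1 = (A.natDegree : ℝ) := by
    rw [Nat.cast_pred hd]; ring
  have hd1 : A.natDegree - 1 + 1 = A.natDegree := Nat.succ_pred_eq_of_pos hd
  have hcD : (derivative A).coeff (A.natDegree - 1)
      = A.coeff A.natDegree * (A.natDegree : ℝ) := by
    rw [coeff_derivative, hd1, hcast]
  have hdR : (0:ℝ) < (A.natDegree : ℝ) := by exact_mod_cast hd
  have hcDne : (derivative A).coeff (A.natDegree - 1) ≠ 0 := by
    rw [hcD]; positivity
  have hD0 : derivative A ≠ 0 := fun h0 => by simp [h0] at hcDne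
  have hDdeg : (derivative A).natDegree = A.natDegree - 1 :=
    le_antisymm (natDegree_derivative_le A) (le_natDegree_of_ne_zero hcDne)
  set P : Polynomial ℝ := X * derivative A with hP
  have hP0 : P ≠ 0 := mul_ne_zero X_ne_zero hD0
  have hPdeg : P.natDegree = A.natDegree := by
    rw [hP, natDegree_mul X_ne_zero hD0, natDegree_X, hDdeg]; omega
  have hdeg : P.degree = A.degree := by
    rw [degree_eq_natDegree hP0, degree_eq_natDegree hA0, hPdeg]
  have hPl : P.leadingCoeff = A.coeff A.natDegree * (A.natDegree : ℝ) := by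
    rw [hP, leadingCoeff_mul, leadingCoeff_X, one_mul, leadingCoeff, hDdeg, hcD]
  have h := Polynomial.div_tendsto_leadingCoeff_div_of_degree_eq P A hdeg
  have heval : ∀ z : ℝ, eval z P = z * (derivative A).eval z := by
    intro z; rw [hP, eval_mul, eval_X]
  have hlim : P.leadingCoeff / A.leadingCoeff = (A.natDegree : ℝ) := by
    rw [hPl, leadingCoeff, mul_comm (A.coeff A.natDegree), mul_div_assoc,
      div_self hlc.ne', mul_one]
  rw [hlim] at h
  simpa only [heval] using h

lemma gA_strict (A : Polynomial ℝ) (hd : 0 < A.natDegree)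
    (hnonneg : ∀ n, 0 ≤ A.coeff n) (hconst : A.coeff 0 = 1)
    {x y : ℝ} (hx : 0 ≤ x) (hxy : x < y) :
    x * (derivative A).eval x / A.eval x < y * (derivative A).eval y / A.eval y :=
  (div_lt_div_iff₀ (evalA_pos A hnonneg hconst hx)
    (evalA_pos A hnonneg hconst (hx.trans hxy.le))).2 (key_lt A hd hnonneg hconst hx hxy)

lemma gA_lt_deg (A : Polynomial ℝ) (hd : 0 < A.natDegree)
    (hnonneg : ∀ n, 0 ≤ A.coeff n) (hconst : A.coeff 0 = 1)
    {z : ℝ} (hz : 0 ≤ z) :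
    z * (derivative A).eval z / A.eval z < (A.natDegree : ℝ) := by
  rw [div_lt_iff₀ (evalA_pos A hnonneg hconst hz), evalD_sum,
    A.eval_eq_sum_range z, Finset.mul_sum]
  have hdR : (0:ℝ) < (A.natDegree : ℝ) := by exact_mod_cast hd
  refine Finset.sum_lt_sum (fun n hn => ?_) ⟨0, Finset.mem_range.2 (Nat.succ_pos _), ?_⟩
  · have hn' : (n : ℝ) ≤ (A.natDegree : ℝ) := by
      exact_mod_cast Nat.lt_succ_iff.1 (Finset.mem_range.1 hn)
    have := mul_nonneg (hnonneg n) (pow_nonneg hz n)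
    nlinarith
  · simp [hconst, hdR]


/-- `specM A c = Σ_t c_t · deg A_t`. -/
noncomputable def specM {I : Type*} [Fintype I] (A : I → Polynomial ℝ) (c : I → ℝ) : ℝ :=
  ∑ t, c t * ((A t).natDegree : ℝ)

/-- `f` restricted to `[0,∞)` is a continuous, strictly increasing bijection
from `[0,∞)` onto `[0, M)`; in particular it admits an inverse `f⁻¹ : [0,M) → [0,∞)`. -/
theorem specF_bijOn {I : Type*} [Fintype I] [Nonempty I]
    (A : I → Polynomial ℝ) (c : I → ℝ)
    (hnonconst : ∀ t, 0 < (A t).natDegree)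
    (hnonneg : ∀ t n, 0 ≤ (A t).coeff n)
    (hconst : ∀ t, (A t).coeff 0 = 1)
    (hdeg1 : ∀ t, (A t).coeff 1 = 0)
    (hc : ∀ t, 0 < c t) :
    ContinuousOn (specF A c) (Set.Ici 0) ∧
      StrictMonoOn (specF A c) (Set.Ici 0) ∧
      Set.BijOn (specF A c) (Set.Ici 0) (Set.Ico 0 (specM A c)) := by
  have hcont : ContinuousOn (specF A c) (Set.Ici 0) := by
    apply continuousOn_finset_sum
    intro t _
    apply ContinuousOn.mul continuousOn_const
    apply ContinuousOn.div
    · exact (continuous_id.mul (Polynomial.continuous _)).continuousOn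
    · exact (Polynomial.continuous _).continuousOn
    · exact fun z hz => (evalA_pos (A t) (hnonneg t) (hconst t) hz).ne'
  have hmono : StrictMonoOn (specF A c) (Set.Ici 0) := by
    intro x hx y _ hxy
    apply Finset.sum_lt_sum_of_nonempty Finset.univ_nonempty
    intro t _
    exact mul_lt_mul_of_pos_left
      (gA_strict (A t) (hnonconst t) (hnonneg t) (hconst t) hx hxy) (hc t)
  have hF0 : specF A c 0 = 0 := by simp [specF]
  have hnn : ∀ z ∈ Set.Ici (0:ℝ), 0 ≤ specF A c z := by
    intro z hz
    apply Finset.sum_nonneg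
    intro t _
    exact mul_nonneg (hc t).le (div_nonneg (evalD_nonneg (A t) (hnonneg t) hz)
      (evalA_pos (A t) (hnonneg t) (hconst t) hz).le)
  have hltM : ∀ z ∈ Set.Ici (0:ℝ), specF A c z < specM A c := by
    intro z hz
    apply Finset.sum_lt_sum_of_nonempty Finset.univ_nonempty
    intro t _
    exact mul_lt_mul_of_pos_left
      (gA_lt_deg (A t) (hnonconst t) (hnonneg t) (hconst t) hz) (hc t)
  refine ⟨hcont, hmono, ⟨fun z hz => ⟨hnn z hz, hltM z hz⟩, hmono.injOn, ?_⟩⟩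
  intro m hm
  obtain ⟨hm0, hmM⟩ := hm
  have htend : Filter.Tendsto (specF A c) Filter.atTop (nhds (specM A c)) := by
    apply tendsto_finset_sum
    intro t _
    exact Filter.Tendsto.const_mul (c t)
      (gA_tendsto (A t) (hnonconst t) (hnonneg t) (hconst t))
  obtain ⟨b, hbm, hb0⟩ :=
    ((htend.eventually (eventually_gt_nhds hmM)).and
      (Filter.eventually_ge_atTop (0:ℝ))).exists
  have hsub : Set.Icc (0:ℝ) b ⊆ Set.Ici 0 := fun z hz => hz.1
  have hivt := intermediate_value_Icc hb0 (hcont.mono hsub)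
  have hmmem : m ∈ Set.Icc (specF A c 0) (specF A c b) := by
    rw [hF0]; exact ⟨hm0, hbm.le⟩
  obtain ⟨z, hzmem, hzeq⟩ := hivt hmmem
  exact ⟨z, hzmem.1, hzeq⟩
end

section
/- Let C be a binary linear code of length s (a linear subspace of F_2^s) with no idle coordinate, i.e., for every coordinate i ∈ {1,…,s} there exists a codeword c ∈ C with c_i = 1. For each integer u, let A_u denote the number of codewords of C of Hamming weight u, and let D be the maximum Hamming weight of a codeword of C. Then A_{D−u} = A_u for all 0 ≤ u ≤ D if and only if the all-ones vector (1,1,…,1) belongs to C. -/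
open Finset

private lemma zmod2_ne (a : ZMod 2) : a ≠ 0 ↔ a = 1 := by revert a; decide

private lemma wt_le (s : ℕ) (c : Fin s → ZMod 2) : hammingNorm c ≤ s := by
  simpa [hammingNorm] using Finset.card_filter_le Finset.univ fun i => c i ≠ 0

private lemma wt_add_allOnes (s : ℕ) (c z : Fin s → ZMod 2) (hz : ∀ i, z i = 1) :
    hammingNorm (c + z) = s - hammingNorm c := by
  have h : (univ.filter fun i => (c + z) i ≠ 0)
      = (univ.filter fun i => c i ≠ 0)ᶜ := by
    ext i
    simp only [mem_filter, mem_univ, true_and, Finset.mem_compl, Pi.add_apply, hz]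
    generalize c i = a; revert a; decide
  simp only [hammingNorm, h, Finset.card_compl, Fintype.card_fin]

private lemma add_self_zero (s : ℕ) (z : Fin s → ZMod 2) : z + z = 0 := by
  funext i
  show z i + z i = 0
  generalize z i = a; revert a; decide

/-- a binary linear code with no idle coordinate has a symmetric weight
distribution (`A_{D−u} = A_u` for all `0 ≤ u ≤ D`, where `D` is the maximum weight)
if and only if it contains the all-ones codeword. -/
theorem weight_distribution_symmetric_iff_allOnes_mem
    (s : ℕ) (C : Submodule (ZMod 2) (Fin s → ZMod 2))
    (hidle : ∀ i : Fin s, ∃ c ∈ C, c i = 1)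
    (D : ℕ)
    (hD : IsGreatest {w : ℕ | ∃ c ∈ C, hammingNorm c = w} D) :
    (∀ u ≤ D,
        {c : Fin s → ZMod 2 | c ∈ C ∧ hammingNorm c = D - u}.ncard =
          {c : Fin s → ZMod 2 | c ∈ C ∧ hammingNorm c = u}.ncard) ↔
      (fun _ : Fin s => (1 : ZMod 2)) ∈ C := by
  classical
  set z : Fin s → ZMod 2 := fun _ => 1 with hzdef
  have hwD : ∀ c ∈ C, hammingNorm c ≤ D := fun c hc => hD.2 ⟨c, hc, rfl⟩
  constructor
  · -- symmetric ⇒ all-ones ∈ C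
    intro hsym
    set Cf : Finset (Fin s → ZMod 2) := Finset.univ.filter (· ∈ C) with hCf
    have hmemCf : ∀ c, c ∈ Cf ↔ c ∈ C := by intro c; simp [hCf]
    -- half of C is 1 at each coordinate
    have hhalf : ∀ i : Fin s,
        2 * (Cf.filter fun c => c i = 1).card = Cf.card := by
      intro i
      obtain ⟨c₀, hc₀C, hc₀i⟩ := hidle i
      have hbij : (Cf.filter fun c => c i = 1).card
          = (Cf.filter fun c => ¬ c i = 1).card := by
        apply Finset.card_bij' (fun c _ => c + c₀) (fun c _ => c + c₀)
        · intro c hc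
          simp only [mem_filter, hmemCf] at hc ⊢
          refine ⟨C.add_mem hc.1 hc₀C, ?_⟩
          simp [Pi.add_apply, hc.2, hc₀i]
        · intro c hc
          simp only [mem_filter, hmemCf] at hc ⊢
          refine ⟨C.add_mem hc.1 hc₀C, ?_⟩
          have h0 : c i = 0 := by
            have := hc.2; generalize c i = a at this ⊢; revert a; decide
          simp [Pi.add_apply, h0, hc₀i]
        · intro c _; rw [add_assoc, add_self_zero, add_zero]
        · intro c _; rw [add_assoc, add_self_zero, add_zero]
      rw [two_mul, hbij]
      nth_rewrite 1 [← hbij]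
      exact Finset.card_filter_add_card_filter_not _
    -- double counting of total weight
    have hsumwt : 2 * ∑ c ∈ Cf, hammingNorm c = s * Cf.card := by
      have h1 : ∀ c : Fin s → ZMod 2,
          hammingNorm c = ∑ i : Fin s, if c i = 1 then 1 else 0 := by
        intro c
        rw [hammingNorm, Finset.card_filter]
        exact Finset.sum_congr rfl fun i _ => by simp [zmod2_ne (c i)]
      calc 2 * ∑ c ∈ Cf, hammingNorm c
          = 2 * ∑ c ∈ Cf, ∑ i : Fin s, if c i = 1 then 1 else 0 := by
            rw [Finset.sum_congr rfl fun c _ => h1 c]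
        _ = ∑ i : Fin s, 2 * ∑ c ∈ Cf, if c i = 1 then 1 else 0 := by
            rw [Finset.sum_comm, Finset.mul_sum]
        _ = ∑ i : Fin s, 2 * (Cf.filter fun c => c i = 1).card := by
            refine Finset.sum_congr rfl fun i _ => ?_
            rw [Finset.card_filter]
        _ = ∑ _i : Fin s, Cf.card := Finset.sum_congr rfl fun i _ => hhalf i
        _ = s * Cf.card := by simp [mul_comm]
    -- weight distribution
    set A : ℕ → ℕ := fun u => (Cf.filter fun c => hammingNorm c = u).card with hA
    have hmaps : ∀ c ∈ Cf, hammingNorm c ∈ Finset.range (D + 1) := by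
      intro c hc
      simp only [Finset.mem_range, Nat.lt_succ_iff]
      exact hwD c ((hmemCf c).1 hc)
    have hAsum : ∑ u ∈ Finset.range (D + 1), A u = Cf.card :=
      (Finset.card_eq_sum_card_fiberwise hmaps).symm
    have hSfib : ∑ u ∈ Finset.range (D + 1), u * A u = ∑ c ∈ Cf, hammingNorm c := by
      rw [← Finset.sum_fiberwise_of_maps_to hmaps hammingNorm]
      refine Finset.sum_congr rfl fun u _ => ?_
      rw [Finset.sum_congr rfl fun c hc => (Finset.mem_filter.1 hc).2]
      simp [hA, mul_comm]
    -- symmetry of A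
    have hAsymm : ∀ u ≤ D, A (D - u) = A u := by
      intro u hu
      have hset : ∀ v : ℕ, {c : Fin s → ZMod 2 | c ∈ C ∧ hammingNorm c = v}
          = ↑(Cf.filter fun c => hammingNorm c = v) := by
        intro v; ext c; simp [hmemCf, Set.mem_setOf_eq]
      have := hsym u hu
      rw [hset, hset, Set.ncard_coe_finset, Set.ncard_coe_finset] at this
      exact this
    -- reflect
    have hreflect : ∑ u ∈ Finset.range (D + 1), (D - u) * A u
        = ∑ u ∈ Finset.range (D + 1), u * A u := by
      have := Finset.sum_range_reflect (fun j => j * A j) (D + 1)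
      simp only [Nat.add_sub_cancel] at this
      rw [← this]
      refine Finset.sum_congr rfl fun u hu => ?_
      have hu' : u ≤ D := Nat.lt_succ_iff.1 (Finset.mem_range.1 hu)
      rw [hAsymm u hu']
    -- 2 * Σ wt = D * |Cf|
    have h2S : 2 * ∑ c ∈ Cf, hammingNorm c = D * Cf.card := by
      rw [← hSfib, two_mul]
      nth_rewrite 1 [← hreflect]
      rw [← Finset.sum_add_distrib]
      have hterm : ∀ x ∈ Finset.range (D + 1), (D - x) * A x + x * A x = D * A x := by
        intro x hx
        have hx' : x ≤ D := Nat.lt_succ_iff.1 (Finset.mem_range.1 hx)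
        rw [← add_mul]
        congr 1
        omega
      rw [Finset.sum_congr rfl hterm, ← Finset.mul_sum, hAsum]
    have hcard_pos : 0 < Cf.card := by
      refine Finset.card_pos.2 ⟨0, ?_⟩
      simp [hmemCf, C.zero_mem]
    have hsD : s = D := by
      have := hsumwt.symm.trans h2S
      exact Nat.eq_of_mul_eq_mul_right hcard_pos this
    obtain ⟨c, hcC, hcwt⟩ := hD.1
    have hcall : ∀ i, c i = 1 := by
      have hfull : (univ.filter fun i => c i ≠ 0) = (univ : Finset (Fin s)) := by
        apply Finset.eq_univ_of_card
        have hns : hammingNorm c = s := hcwt.trans hsD.symm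
        simpa [hammingNorm, Fintype.card_fin] using hns
      intro i
      have hi : i ∈ univ.filter fun i => c i ≠ 0 := by
        rw [hfull]; exact Finset.mem_univ i
      exact (zmod2_ne (c i)).1 (Finset.mem_filter.1 hi).2
    have hzc : z = c := funext fun i => (hcall i).symm
    rw [hzc]
    exact hcC
  · -- all-ones ∈ C ⇒ symmetric
    intro h1 u hu
    have hz1 : ∀ i, z i = 1 := fun i => rfl
    have hDs : D = s := le_antisymm
      (by obtain ⟨c, hc, hw⟩ := hD.1; exact hw ▸ wt_le s c)
      (by have := hD.2 ⟨z, h1, rfl⟩; simpa [hammingNorm, hzdef] using this)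
    have hus : u ≤ s := hDs ▸ hu
    have himg : {c : Fin s → ZMod 2 | c ∈ C ∧ hammingNorm c = D - u}
        = (· + z) '' {c : Fin s → ZMod 2 | c ∈ C ∧ hammingNorm c = u} := by
      ext x
      simp only [Set.mem_image, Set.mem_setOf_eq]
      constructor
      · rintro ⟨hxC, hxw⟩
        refine ⟨x + z, ⟨C.add_mem hxC h1, ?_⟩, ?_⟩
        · rw [wt_add_allOnes s x z hz1, hxw, hDs]
          omega
        · rw [add_assoc, add_self_zero, add_zero]
      · rintro ⟨c, ⟨hcC, hcw⟩, hcx⟩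
        subst hcx
        refine ⟨C.add_mem hcC h1, ?_⟩
        rw [wt_add_allOnes s c z hz1, hcw, hDs]
    rw [himg, Set.ncard_image_of_injective]
    intro a b hab
    have := congrArg (· + z) hab
    simpa [add_assoc, add_self_zero, add_zero] using this
end

section
/- Let A be a nonconstant real polynomial with nonnegative coefficients, constant term 1, and degree ū, and define g(z) = z A'(z)/A(z) for z > 0. Then g(z) + g(1/z) = ū for all real z > 0 if and only if A is symmetric, i.e., its coefficients satisfy a_{ū−u} = a_u for all 0 ≤ u ≤ ū. -/
open Polynomial

lemma my_reflect_eval (p : Polynomial ℝ) (N : ℕ) (h : p.natDegree ≤ N) (z : ℝ) (hz : z ≠ 0) :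
    (reflect N p).eval z⁻¹ * z ^ N = p.eval z := by
  have : Invertible z := invertibleOfNonzero hz
  have := eval₂_reflect_mul_pow (RingHom.id ℝ) z N p h
  rw [invOf_eq_inv] at this
  exact this

lemma my_eval_pos (A : Polynomial ℝ) (hnonneg : ∀ n, 0 ≤ A.coeff n) (hconst : A.coeff 0 = 1)
    (z : ℝ) (hz : 0 ≤ z) : 0 < A.eval z := by
  rw [Polynomial.eval_eq_sum_range]
  apply Finset.sum_pos'
  · intro i _; exact mul_nonneg (hnonneg i) (pow_nonneg hz i)
  · exact ⟨0, Finset.mem_range.mpr (Nat.succ_pos _), by simp [hconst]⟩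

lemma my_reflect_deriv (A : Polynomial ℝ) (m : ℕ) (hdeg : A.natDegree = m + 1) :
    reflect m (derivative A) =
      C ((m : ℝ) + 1) * reflect (m + 1) A - X * derivative (reflect (m + 1) A) := by
  ext n
  simp only [coeff_reflect, coeff_sub, coeff_C_mul]
  rcases n with _ | k
  · simp only [revAt_le (Nat.zero_le m), Nat.sub_zero, coeff_derivative, mul_coeff_zero,
      coeff_X_zero, zero_mul, sub_zero, revAt_le (Nat.zero_le (m+1)), Nat.sub_zero]
    ring
  · rw [coeff_X_mul, coeff_derivative]
    rcases le_or_gt (k + 1) m with h | h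
    · rw [revAt_le h, revAt_le (by omega : k + 1 ≤ m + 1), coeff_derivative]
      have h1 : m - (k + 1) + 1 = m + 1 - (k + 1) := by omega
      rw [h1]
      have h2 : ((m - (k+1) : ℕ) : ℝ) = (m : ℝ) - (k + 1) := by
        push_cast [Nat.cast_sub (by omega : k + 1 ≤ m)]; ring
      rw [coeff_reflect, revAt_le (by omega : k + 1 ≤ m + 1), h2]
      ring
    · rw [revAt_eq_self_of_lt h, coeff_derivative, coeff_reflect]
      have hz : A.coeff (k + 1 + 1) = 0 :=
        coeff_eq_zero_of_natDegree_lt (by omega)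
      rw [hz]
      rcases eq_or_lt_of_le (by omega : m + 1 ≤ k + 1) with he | hlt
      · have hmk : m = k := by omega
        subst hmk
        rw [← he, revAt_le (le_refl (m+1)), Nat.sub_self]
        ring
      · rw [revAt_eq_self_of_lt hlt]
        have hz2 : A.coeff (k + 1) = 0 := coeff_eq_zero_of_natDegree_lt (by omega)
        rw [hz2]
        ring

/-- for a nonconstant real polynomial `A` with nonnegative coefficients,
constant term `1` and degree `ū`, setting `g(z) = z A'(z)/A(z)`, the identity
`g(z) + g(1/z) = ū` holds for all `z > 0` if and only if `A` is symmetric. -/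
theorem g_reciprocal_sum_iff_symmetric (A : Polynomial ℝ) (ubar : ℕ)
    (hdeg : A.natDegree = ubar)
    (hnonconst : 0 < A.natDegree)
    (hnonneg : ∀ n, 0 ≤ A.coeff n)
    (hconst : A.coeff 0 = 1) :
    (∀ z : ℝ, 0 < z →
        z * (Polynomial.derivative A).eval z / A.eval z
          + z⁻¹ * (Polynomial.derivative A).eval z⁻¹ / A.eval z⁻¹ = (ubar : ℝ)) ↔
      (∀ u ≤ ubar, A.coeff (ubar - u) = A.coeff u) := by
  obtain ⟨m, hm⟩ : ∃ m, ubar = m + 1 := ⟨ubar - 1, by omega⟩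
  subst hm
  set B := reflect (m + 1) A with hB
  have hApos : ∀ z : ℝ, 0 ≤ z → 0 < A.eval z := my_eval_pos A hnonneg hconst
  have hdegle : A.natDegree ≤ m + 1 := hdeg.le
  have hdegle' : (derivative A).natDegree ≤ m :=
    (natDegree_derivative_le A).trans (by omega)
  have hDeq := my_reflect_deriv A m hdeg
  constructor
  · intro H
    have hBz : ∀ z : ℝ, 0 < z → B.eval z = A.eval z⁻¹ * z ^ (m+1) := by
      intro z hz
      have e := my_reflect_eval A (m+1) hdegle z⁻¹ (inv_ne_zero hz.ne')
      rw [inv_inv, ← hB, inv_pow, ← div_eq_mul_inv,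
        div_eq_iff (pow_ne_zero _ hz.ne')] at e
      exact e
    have hDz : ∀ z : ℝ, 0 < z →
        (reflect m (derivative A)).eval z = (derivative A).eval z⁻¹ * z ^ m := by
      intro z hz
      have e := my_reflect_eval (derivative A) m hdegle' z⁻¹ (inv_ne_zero hz.ne')
      rw [inv_inv, inv_pow, ← div_eq_mul_inv, div_eq_iff (pow_ne_zero _ hz.ne')] at e
      exact e
    -- polynomial identity
    have hpoly : X * derivative A * B + reflect m (derivative A) * A
        = C ((m : ℝ) + 1) * (A * B) := by
      apply eq_of_infinite_eval_eq
      apply Set.Infinite.mono _ (Set.Ioi_infinite (0:ℝ))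
      intro z hz
      simp only [Set.mem_Ioi] at hz
      simp only [Set.mem_setOf_eq, eval_add, eval_mul, eval_X, eval_C]
      rw [hBz z hz, hDz z hz]
      have hAz := hApos z hz.le
      have hAiz := hApos z⁻¹ (inv_nonneg.mpr hz.le)
      have h1 := H z hz
      push_cast at h1
      rw [div_add_div _ _ hAz.ne' hAiz.ne',
        div_eq_iff (mul_ne_zero hAz.ne' hAiz.ne')] at h1
      have hzz : z * z⁻¹ = 1 := mul_inv_cancel₀ hz.ne'
      have h1' : z * z * (derivative A).eval z * A.eval z⁻¹
          + A.eval z * (derivative A).eval z⁻¹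
          = ((m:ℝ) + 1) * (A.eval z * A.eval z⁻¹) * z := by
        linear_combination z * h1
          - A.eval z * (derivative A).eval z⁻¹ * hzz
      linear_combination z ^ m * h1'
    -- Wronskian vanishes
    have hkey : derivative A * B = derivative B * A := by
      have h0 : X * (derivative A * B - derivative B * A) = 0 := by
        rw [hDeq, ← hB] at hpoly
        linear_combination hpoly
      rcases mul_eq_zero.mp h0 with h | h
      · exact absurd h X_ne_zero
      · linear_combination h
    -- quotient has zero derivative
    have hderiv : ∀ x : ℝ, 0 < x → HasDerivAt (fun y => B.eval y / A.eval y) 0 x := by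
      intro x hx
      have hne := (hApos x hx.le).ne'
      have h := (B.hasDerivAt x).div (A.hasDerivAt x) hne
      have hnum : (derivative B).eval x * A.eval x - B.eval x * (derivative A).eval x = 0 := by
        have h2 := congrArg (eval x) hkey
        simp only [eval_mul] at h2
        linear_combination -h2
      rw [hnum, zero_div] at h
      exact h
    have hconst' : ∀ z : ℝ, 0 < z → B.eval z * A.eval 1 = A.eval z * B.eval 1 := by
      intro z hz
      have ha : 0 < min z 1 := lt_min hz one_pos
      have hmem : ∀ x ∈ Set.Icc (min z 1) (max z 1), 0 < x := fun x hx =>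
        lt_of_lt_of_le ha hx.1
      have hcont : ContinuousOn (fun y => B.eval y / A.eval y)
          (Set.Icc (min z 1) (max z 1)) := fun x hx =>
        ((hderiv x (hmem x hx)).continuousAt).continuousWithinAt
      have hd : ∀ x ∈ Set.Ico (min z 1) (max z 1),
          HasDerivWithinAt (fun y => B.eval y / A.eval y) 0 (Set.Ici x) x :=
        fun x hx => (hderiv x (hmem x ⟨hx.1, hx.2.le⟩)).hasDerivWithinAt
      have hc := constant_of_has_deriv_right_zero hcont hd
      have h1 := hc z ⟨min_le_left _ _, le_max_left _ _⟩
      have h2 := hc 1 ⟨min_le_right _ _, le_max_right _ _⟩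
      have h3 : B.eval z / A.eval z = B.eval 1 / A.eval 1 := h1.trans h2.symm
      rw [div_eq_div_iff (hApos z hz.le).ne' (hApos 1 one_pos.le).ne'] at h3
      linear_combination h3
    have hBeqA : B * C (A.eval 1) = A * C (B.eval 1) := by
      apply eq_of_infinite_eval_eq
      apply Set.Infinite.mono _ (Set.Ioi_infinite (0:ℝ))
      intro z hz
      simp only [Set.mem_Ioi] at hz
      simp only [Set.mem_setOf_eq, eval_mul, eval_C]
      exact hconst' z hz
    have hc0 := congrArg (fun p => coeff p 0) hBeqA
    have hcN := congrArg (fun p => coeff p (m+1)) hBeqA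
    simp only [coeff_mul_C, hB, coeff_reflect, revAt_zero, revAt_le (le_refl (m+1)),
      Nat.sub_self, hconst, one_mul] at hc0 hcN
    -- hc0 : A.coeff (m+1) * A.eval 1 = B.eval 1  (times coeff 0 = 1)
    -- hcN : A.eval 1 = A.coeff (m+1) * B.eval 1
    have hA1 : 0 < A.eval 1 := hApos 1 one_pos.le
    have hsq : A.coeff (m+1) ^ 2 * A.eval 1 = 1 * A.eval 1 := by
      linear_combination A.coeff (m+1) * hc0 - hcN
    have hsq' : A.coeff (m+1) ^ 2 = 1 := mul_right_cancel₀ hA1.ne' hsq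
    have haN : A.coeff (m+1) = 1 := by
      nlinarith [hnonneg (m+1), hsq', sq_nonneg (A.coeff (m+1) - 1), sq_nonneg (A.coeff (m+1) + 1)]
    have hB1 : B.eval 1 = A.eval 1 := by rw [hB, ← hc0, haN, one_mul]
    have hBA : B = A := by
      have := hBeqA
      rw [hB1] at this
      exact mul_right_cancel₀ (by simpa using hA1.ne') this
    intro u hu
    have := congrArg (fun p => coeff p u) hBA
    simp only [hB, coeff_reflect, revAt_le hu] at this
    exact this
  · intro hsym z hz
    have hBA : B = A := by
      ext n
      rw [hB, coeff_reflect]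
      rcases le_or_gt n (m + 1) with h | h
      · rw [revAt_le h]; exact hsym n h
      · rw [revAt_eq_self_of_lt h]
    have hAz := hApos z hz.le
    have hAiz := hApos z⁻¹ (inv_nonneg.mpr hz.le)
    have h1 := my_reflect_eval A (m+1) hdegle z hz.ne'
    rw [← hB, hBA] at h1
    have h2 := my_reflect_eval (derivative A) m hdegle' z hz.ne'
    rw [hDeq, ← hB, hBA] at h2
    simp only [eval_sub, eval_mul, eval_C, eval_X] at h2
    push_cast
    rw [div_add_div _ _ hAz.ne' hAiz.ne',
      div_eq_iff (mul_ne_zero hAz.ne' hAiz.ne')]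
    linear_combination (-(z * A.eval z⁻¹)) * h2
      + (((m:ℝ) + 1) * A.eval z⁻¹ - z⁻¹ * (derivative A).eval z⁻¹) * h1
end

section
/- Let I be a finite nonempty index set. For each t in I let A_t be a nonconstant real polynomial with nonnegative coefficients, constant term 1, and no degree-1 term, and let c_t > 0. Define f(z) = Σ_{t∈I} c_t · z A_t'(z) / A_t(z), let M = Σ_{t∈I} c_t · deg(A_t), and let f^{-1} : [0, M) → [0, ∞) denote the inverse of the continuous strictly increasing bijection f : [0, ∞) → [0, M). If every A_t is symmetric, then f^{-1}(M − α) = 1 / f^{-1}(α) for all α ∈ (0, M). -/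
open Polynomial Finset

lemma spec_evalB (A : Polynomial ℝ) (z : ℝ) :
    z * (Polynomial.derivative A).eval z
      = ∑ n ∈ range (A.natDegree + 1), (n : ℝ) * A.coeff n * z ^ n := by
  set d := A.natDegree with hd
  have hlt : (Polynomial.derivative A).natDegree < d + 1 :=
    lt_of_le_of_lt (Polynomial.natDegree_derivative_le A) (by omega)
  have h1 : ∑ n ∈ range (d + 2), (n : ℝ) * A.coeff n * z ^ n
      = ∑ n ∈ range (d + 1), (n : ℝ) * A.coeff n * z ^ n := by
    rw [Finset.sum_range_succ,
      Polynomial.coeff_eq_zero_of_natDegree_lt (show A.natDegree < d + 1 by omega)]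
    ring
  rw [← h1, Finset.sum_range_succ', Polynomial.eval_eq_sum_range' hlt, Finset.mul_sum]
  simp only [Polynomial.coeff_derivative]
  rw [Nat.cast_zero, zero_mul, zero_mul, add_zero]
  refine Finset.sum_congr rfl fun i _ => ?_
  push_cast
  ring

lemma spec_evalA_pos (A : Polynomial ℝ) (hnn : ∀ n, 0 ≤ A.coeff n) (h0 : A.coeff 0 = 1)
    {z : ℝ} (hz : 0 ≤ z) : 0 < A.eval z := by
  rw [Polynomial.eval_eq_sum_range]
  refine Finset.sum_pos' (fun i _ => mul_nonneg (hnn i) (pow_nonneg hz i)) ⟨0, ?_, ?_⟩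
  · simp
  · simp [h0]

lemma spec_pow_cross {x y : ℝ} (hx : 0 ≤ x) (hxy : x ≤ y) {m n : ℕ} (hmn : m ≤ n) :
    x ^ n * y ^ m ≤ x ^ m * y ^ n := by
  obtain ⟨k, rfl⟩ := Nat.exists_eq_add_of_le hmn
  have h1 : x ^ k ≤ y ^ k := pow_le_pow_left₀ hx hxy k
  have h2 : 0 ≤ x ^ m * y ^ m := mul_nonneg (pow_nonneg hx m) (pow_nonneg (hx.trans hxy) m)
  calc x ^ (m + k) * y ^ m = (x ^ m * y ^ m) * x ^ k := by ring
    _ ≤ (x ^ m * y ^ m) * y ^ k := mul_le_mul_of_nonneg_left h1 h2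
    _ = x ^ m * y ^ (m + k) := by ring

lemma spec_ratio_strictMono (A : Polynomial ℝ) (hd : 0 < A.natDegree)
    (hnn : ∀ n, 0 ≤ A.coeff n) (h0 : A.coeff 0 = 1) {x y : ℝ}
    (hx : 0 ≤ x) (hxy : x < y) :
    x * (Polynomial.derivative A).eval x / A.eval x
      < y * (Polynomial.derivative A).eval y / A.eval y := by
  set d := A.natDegree with hdd
  have hy : 0 ≤ y := hx.trans hxy.le
  have hAx := spec_evalA_pos A hnn h0 hx
  have hAy := spec_evalA_pos A hnn h0 hy
  rw [div_lt_div_iff₀ hAx hAy]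
  have had : 0 < A.coeff d := by
    refine lt_of_le_of_ne (hnn d) (Ne.symm ?_)
    have hA0 : A ≠ 0 := fun h => by simp [h] at h0
    simpa [hdd, Polynomial.coeff_natDegree] using Polynomial.leadingCoeff_ne_zero.mpr hA0
  set s := range (d + 1) with hs
  have h1 : (∑ n ∈ s, (n : ℝ) * A.coeff n * x ^ n) * (∑ m ∈ s, A.coeff m * y ^ m)
      = ∑ n ∈ s, ∑ m ∈ s, (n : ℝ) * A.coeff n * A.coeff m * (x ^ n * y ^ m) := by
    rw [Finset.sum_mul_sum]
    exact Finset.sum_congr rfl fun n _ => Finset.sum_congr rfl fun m _ => by ring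
  have h2 : (∑ n ∈ s, (n : ℝ) * A.coeff n * y ^ n) * (∑ m ∈ s, A.coeff m * x ^ m)
      = ∑ n ∈ s, ∑ m ∈ s, (m : ℝ) * A.coeff n * A.coeff m * (x ^ n * y ^ m) := by
    rw [Finset.sum_mul_sum, Finset.sum_comm]
    exact Finset.sum_congr rfl fun n _ => Finset.sum_congr rfl fun m _ => by ring
  have key : x * (Polynomial.derivative A).eval x * A.eval y
      - y * (Polynomial.derivative A).eval y * A.eval x
      = ∑ n ∈ s, ∑ m ∈ s, ((n : ℝ) - m) * A.coeff n * A.coeff m * (x ^ n * y ^ m) := by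
    rw [spec_evalB, spec_evalB, Polynomial.eval_eq_sum_range, Polynomial.eval_eq_sum_range,
      ← hdd, ← hs, h1, h2, ← Finset.sum_sub_distrib]
    refine Finset.sum_congr rfl fun n _ => ?_
    rw [← Finset.sum_sub_distrib]
    exact Finset.sum_congr rfl fun m _ => by ring
  set S := ∑ n ∈ s, ∑ m ∈ s, ((n : ℝ) - m) * A.coeff n * A.coeff m * (x ^ n * y ^ m) with hS
  have hswap : S = ∑ n ∈ s, ∑ m ∈ s, ((m : ℝ) - n) * A.coeff m * A.coeff n * (x ^ m * y ^ n) := by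
    rw [hS]; exact Finset.sum_comm
  have h2S : S + S = ∑ n ∈ s, ∑ m ∈ s,
      ((n : ℝ) - m) * A.coeff n * A.coeff m * (x ^ n * y ^ m - x ^ m * y ^ n) := by
    nth_rewrite 2 [hswap]
    rw [hS, ← Finset.sum_add_distrib]
    refine Finset.sum_congr rfl fun n _ => ?_
    rw [← Finset.sum_add_distrib]
    exact Finset.sum_congr rfl fun m _ => by ring
  have hterm : ∀ n ∈ s, ∀ m ∈ s,
      ((n : ℝ) - m) * A.coeff n * A.coeff m * (x ^ n * y ^ m - x ^ m * y ^ n) ≤ 0 := by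
    intro n _ m _
    rcases le_total m n with h | h
    · have hc1 : (0:ℝ) ≤ ((n : ℝ) - m) * A.coeff n * A.coeff m :=
        mul_nonneg (mul_nonneg (sub_nonneg.mpr (by exact_mod_cast h)) (hnn n)) (hnn m)
      exact mul_nonpos_of_nonneg_of_nonpos hc1
        (sub_nonpos.mpr (spec_pow_cross hx hxy.le h))
    · have hc1 : ((n : ℝ) - m) * A.coeff n * A.coeff m ≤ 0 :=
        mul_nonpos_of_nonpos_of_nonneg
          (mul_nonpos_of_nonpos_of_nonneg (sub_nonpos.mpr (by exact_mod_cast h)) (hnn n)) (hnn m)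
      exact mul_nonpos_of_nonpos_of_nonneg hc1
        (sub_nonneg.mpr (spec_pow_cross hx hxy.le h))
  have hneg : S + S < 0 := by
    rw [h2S]
    have : ∑ n ∈ s, ∑ m ∈ s,
        ((n : ℝ) - m) * A.coeff n * A.coeff m * (x ^ n * y ^ m - x ^ m * y ^ n)
        < ∑ n ∈ s, (0:ℝ) := by
      refine Finset.sum_lt_sum (fun n hn => Finset.sum_nonpos (fun m hm => hterm n hn m hm))
        ⟨d, Finset.self_mem_range_succ d, ?_⟩
      have hin : ∑ m ∈ s, ((d : ℝ) - m) * A.coeff d * A.coeff m * (x ^ d * y ^ m - x ^ m * y ^ d)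
          < ∑ m ∈ s, (0:ℝ) := by
        refine Finset.sum_lt_sum (fun m hm => hterm d (Finset.self_mem_range_succ d) m hm)
          ⟨0, by simp [hs], ?_⟩
        have hxy' : x ^ d < y ^ d := pow_lt_pow_left₀ hxy hx hd.ne'
        have : x ^ d * y ^ 0 - x ^ 0 * y ^ d < 0 := by simpa using sub_neg.mpr hxy'
        have hpos : 0 < ((d : ℝ) - (0:ℕ)) * A.coeff d * A.coeff 0 := by
          simp only [h0, Nat.cast_zero, sub_zero, mul_one]
          exact mul_pos (by exact_mod_cast hd) had
        exact mul_neg_of_pos_of_neg hpos this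
      simpa using hin
    simpa using this
  have : S < 0 := by linarith
  linarith [key, this]

lemma spec_ratio_symm (A : Polynomial ℝ) (hnn : ∀ n, 0 ≤ A.coeff n) (h0 : A.coeff 0 = 1)
    (hsymm : ∀ u ≤ A.natDegree, A.coeff (A.natDegree - u) = A.coeff u)
    {z : ℝ} (hz : 0 < z) :
    z⁻¹ * (Polynomial.derivative A).eval z⁻¹ / A.eval z⁻¹
      = (A.natDegree : ℝ) - z * (Polynomial.derivative A).eval z / A.eval z := by
  set d := A.natDegree with hdd
  have hz' : (0:ℝ) ≤ z⁻¹ := inv_nonneg.mpr hz.le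
  have hP := spec_evalA_pos A hnn h0 hz.le
  have hzd : z ^ d ≠ 0 := pow_ne_zero d hz.ne'
  have hpow : ∀ j ≤ d, z ^ d * (z⁻¹) ^ j = z ^ (d - j) := by
    intro j hj
    rw [inv_pow, eq_comm]
    field_simp
    rw [← pow_add]
    congr 1
    omega
  have hQe : z ^ d * A.eval z⁻¹ = A.eval z := by
    rw [Polynomial.eval_eq_sum_range, Polynomial.eval_eq_sum_range, ← hdd, Finset.mul_sum]
    conv_rhs => rw [← Finset.sum_range_reflect]
    refine Finset.sum_congr rfl fun j hj => ?_
    have hj' : j ≤ d := Nat.lt_succ_iff.mp (Finset.mem_range.mp hj)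
    simp only [Nat.add_sub_cancel]
    rw [hsymm j hj']
    rw [show z ^ d * (A.coeff j * z⁻¹ ^ j) = A.coeff j * (z ^ d * z⁻¹ ^ j) by ring,
      hpow j hj']
  have hR : (d:ℝ) * A.eval z - z * (Polynomial.derivative A).eval z
      = ∑ j ∈ range (d+1), ((d:ℝ) - j) * A.coeff j * z ^ j := by
    rw [spec_evalB, ← hdd, Polynomial.eval_eq_sum_range, ← hdd, Finset.mul_sum,
      ← Finset.sum_sub_distrib]
    exact Finset.sum_congr rfl fun j _ => by ring
  have hBe : z ^ d * (z⁻¹ * (Polynomial.derivative A).eval z⁻¹)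
      = (d:ℝ) * A.eval z - z * (Polynomial.derivative A).eval z := by
    rw [hR, spec_evalB, ← hdd, Finset.mul_sum]
    conv_rhs => rw [← Finset.sum_range_reflect]
    refine Finset.sum_congr rfl fun j hj => ?_
    have hj' : j ≤ d := Nat.lt_succ_iff.mp (Finset.mem_range.mp hj)
    simp only [Nat.add_sub_cancel]
    rw [hsymm j hj', Nat.cast_sub hj', ← hpow j hj']
    ring
  have hfin : z⁻¹ * (Polynomial.derivative A).eval z⁻¹ / A.eval z⁻¹
      = (z ^ d * (z⁻¹ * (Polynomial.derivative A).eval z⁻¹)) / (z ^ d * A.eval z⁻¹) := by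
    rw [mul_div_mul_left _ _ hzd]
  rw [hfin, hQe, hBe, sub_div, mul_div_assoc, div_self hP.ne', mul_one]

/-- if every `A_t` is symmetric then the inverse function satisfies
`f⁻¹(M − α) = 1 / f⁻¹(α)` for all `α ∈ (0, M)`. -/
theorem specFinv_symmetry {I : Type*} [Fintype I] [Nonempty I]
    (A : I → Polynomial ℝ) (c : I → ℝ)
    (hnonconst : ∀ t, 0 < (A t).natDegree)
    (hnonneg : ∀ t n, 0 ≤ (A t).coeff n)
    (hconst : ∀ t, (A t).coeff 0 = 1)
    (hdeg1 : ∀ t, (A t).coeff 1 = 0)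
    (hc : ∀ t, 0 < c t)
    (hsymm : ∀ t, ∀ u ≤ (A t).natDegree,
      (A t).coeff ((A t).natDegree - u) = (A t).coeff u)
    (finv : ℝ → ℝ)
    (hfinv : ∀ α : ℝ, 0 ≤ α → α < specM A c →
      0 ≤ finv α ∧ specF A c (finv α) = α) :
    ∀ α : ℝ, 0 < α → α < specM A c → finv (specM A c - α) = (finv α)⁻¹ := by
  intro α hα hαM
  set M := specM A c with hM
  obtain ⟨hx0, hfx⟩ := hfinv α hα.le hαM
  obtain ⟨hy0, hfy⟩ := hfinv (M - α) (by linarith) (by linarith)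
  set x := finv α with hxdef
  set y := finv (M - α) with hydef
  have hmono : ∀ u v : ℝ, 0 ≤ u → u < v → specF A c u < specF A c v := by
    intro u v hu huv
    refine Finset.sum_lt_sum_of_nonempty Finset.univ_nonempty fun t _ => ?_
    exact mul_lt_mul_of_pos_left
      (spec_ratio_strictMono (A t) (hnonconst t) (hnonneg t) (hconst t) hu huv) (hc t)
  have hinj : ∀ u v : ℝ, 0 ≤ u → 0 ≤ v → specF A c u = specF A c v → u = v := by
    intro u v hu hv h
    rcases lt_trichotomy u v with hlt | heq | hgt
    · exact absurd h (ne_of_lt (hmono u v hu hlt))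
    · exact heq
    · exact absurd h.symm (ne_of_lt (hmono v u hv hgt))
  have hxpos : 0 < x := by
    rcases hx0.lt_or_eq with h | h
    · exact h
    · exfalso
      have h0 : specF A c 0 = 0 := by simp [specF]
      rw [← h, h0] at hfx
      linarith
  have hsymmF : specF A c x⁻¹ = M - specF A c x := by
    rw [hM]
    unfold specF specM
    rw [← Finset.sum_sub_distrib]
    refine Finset.sum_congr rfl fun t _ => ?_
    rw [spec_ratio_symm (A t) (hnonneg t) (hconst t) (hsymm t) hxpos]
    ring
  have hfy' : specF A c y = specF A c x⁻¹ := by rw [hfy, hsymmF, hfx]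
  exact hinj y x⁻¹ hy0 (inv_nonneg.mpr hx0) hfy'
end

section
/- Let I be a finite nonempty index set. For each t in I let A_t be a nonconstant real polynomial with nonnegative coefficients, constant term 1, and no degree-1 term, and let c_t > 0 with M := Σ_{t∈I} c_t · deg(A_t) ≤ 1. Define f(z) = Σ_{t∈I} c_t · z A_t'(z)/A_t(z), let f^{-1} : [0, M) → [0, ∞) be its inverse, fix an integer q ≥ 2, and for α ∈ (0, M) define G(α) = (1−q) h(α) − q α log f^{-1}(α) + q Σ_{t∈I} c_t log A_t(f^{-1}(α)), where h(α) = −α log α − (1−α) log(1−α). If G(M − α) = G(α) for all α ∈ (0, M), then M = 2 f((M/(2−M))^{(q−1)/q}); equivalently, q log f^{-1}(M/2) = (1−q) log((2−M)/M). -/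
open Polynomial Finset Real

/-- Binary entropy function `h(α) = −α log α − (1−α) log(1−α)`. -/
noncomputable def binEnt (α : ℝ) : ℝ :=
  -α * Real.log α - (1 - α) * Real.log (1 - α)

/-- Spectral shape
`G(α) = (1−q) h(α) − q α log f⁻¹(α) + q Σ_t c_t log A_t(f⁻¹(α))`. -/
noncomputable def specG {I : Type*} [Fintype I] (A : I → Polynomial ℝ) (c : I → ℝ)
    (q : ℕ) (finv : ℝ → ℝ) (α : ℝ) : ℝ :=
  (1 - (q : ℝ)) * binEnt α - (q : ℝ) * α * Real.log (finv α)
    + (q : ℝ) * ∑ t, c t * Real.log ((A t).eval (finv α))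

section Aux

lemma coeff_XderivMul (P : ℝ[X]) (k : ℕ) :
    (X * derivative P).coeff k = (k : ℝ) * P.coeff k := by
  cases k with
  | zero => simp
  | succ n => rw [coeff_X_mul, coeff_derivative]; push_cast; ring

lemma eval_ge_single (P : ℝ[X]) (h : ∀ n, 0 ≤ P.coeff n) {z : ℝ} (hz : 0 ≤ z) (d : ℕ) :
    P.coeff d * z ^ d ≤ P.eval z := by
  have hN : P.natDegree < max P.natDegree d + 1 := by omega
  rw [eval_eq_sum_range' hN]
  exact Finset.single_le_sum (f := fun i => P.coeff i * z ^ i)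
    (fun i _ => mul_nonneg (h i) (pow_nonneg hz i))
    (Finset.mem_range.2 (by omega))

lemma eval_pos_of_nonneg (P : ℝ[X]) (h : ∀ n, 0 ≤ P.coeff n) (h0 : P.coeff 0 = 1)
    {z : ℝ} (hz : 0 ≤ z) : 0 < P.eval z := by
  have := eval_ge_single P h hz 0
  rw [h0, pow_zero, mul_one] at this
  linarith

lemma antidiag_sym_nonneg (a : ℕ → ℝ) (ha : ∀ n, 0 ≤ a n) (n : ℕ) :
    0 ≤ ∑ p ∈ Finset.HasAntidiagonal.antidiagonal n, ((p.1 : ℝ) * p.1 - p.1 * p.2) * a p.1 * a p.2 := by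
  have hswap : ∑ p ∈ Finset.HasAntidiagonal.antidiagonal n, ((p.1 : ℝ) * p.1 - p.1 * p.2) * a p.1 * a p.2
      = ∑ p ∈ Finset.HasAntidiagonal.antidiagonal n, ((p.2 : ℝ) * p.2 - p.2 * p.1) * a p.2 * a p.1 :=
    (Finset.Nat.sum_antidiagonal_swap
      (f := fun p => ((p.1 : ℝ) * p.1 - p.1 * p.2) * a p.1 * a p.2)).symm
  have h2 : 2 * ∑ p ∈ Finset.HasAntidiagonal.antidiagonal n, ((p.1 : ℝ) * p.1 - p.1 * p.2) * a p.1 * a p.2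
      = ∑ p ∈ Finset.HasAntidiagonal.antidiagonal n, ((p.1 : ℝ) - p.2) ^ 2 * a p.1 * a p.2 := by
    rw [two_mul]; nth_rewrite 2 [hswap]
    rw [← Finset.sum_add_distrib]
    exact Finset.sum_congr rfl fun p _ => by ring
  nlinarith [Finset.sum_nonneg (fun p (_ : p ∈ Finset.HasAntidiagonal.antidiagonal n) =>
    mul_nonneg (mul_nonneg (sq_nonneg ((p.1 : ℝ) - p.2)) (ha p.1)) (ha p.2))]

lemma coeff_CA_sub_BB (P : ℝ[X]) (n : ℕ) :
    ((X * derivative (X * derivative P)) * P - (X * derivative P) * (X * derivative P)).coeff n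
      = ∑ p ∈ Finset.HasAntidiagonal.antidiagonal n,
          ((p.1 : ℝ) * p.1 - p.1 * p.2) * P.coeff p.1 * P.coeff p.2 := by
  rw [coeff_sub, coeff_mul, coeff_mul, ← Finset.sum_sub_distrib]
  exact Finset.sum_congr rfl fun p _ => by simp only [coeff_XderivMul]; ring

lemma key_coeff_nonneg (P : ℝ[X]) (h : ∀ n, 0 ≤ P.coeff n) (n : ℕ) :
    0 ≤ ((X * derivative (X * derivative P)) * P
        - (X * derivative P) * (X * derivative P)).coeff n := by
  rw [coeff_CA_sub_BB]; exact antidiag_sym_nonneg P.coeff h n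

lemma key_coeff_d (P : ℝ[X]) (h : ∀ n, 0 ≤ P.coeff n) (h0 : P.coeff 0 = 1)
    (hd : 0 < P.natDegree) :
    (P.natDegree : ℝ) ^ 2 * P.coeff P.natDegree ≤
    ((X * derivative (X * derivative P)) * P
        - (X * derivative P) * (X * derivative P)).coeff P.natDegree := by
  set d := P.natDegree with hdd
  rw [coeff_CA_sub_BB]
  set S := ∑ p ∈ Finset.HasAntidiagonal.antidiagonal d,
      ((p.1 : ℝ) * p.1 - p.1 * p.2) * P.coeff p.1 * P.coeff p.2 with hS
  have hswap : S = ∑ p ∈ Finset.HasAntidiagonal.antidiagonal d,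
      ((p.2 : ℝ) * p.2 - p.2 * p.1) * P.coeff p.2 * P.coeff p.1 :=
    (Finset.Nat.sum_antidiagonal_swap
      (f := fun p => ((p.1 : ℝ) * p.1 - p.1 * p.2) * P.coeff p.1 * P.coeff p.2)).symm
  have h2 : 2 * S = ∑ p ∈ Finset.HasAntidiagonal.antidiagonal d,
      ((p.1 : ℝ) - p.2) ^ 2 * P.coeff p.1 * P.coeff p.2 := by
    rw [two_mul]; nth_rewrite 2 [hswap]
    rw [← Finset.sum_add_distrib]
    exact Finset.sum_congr rfl fun p _ => by ring
  have hne : ((0 : ℕ), d) ≠ (d, 0) := by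
    intro hcontra
    have := congrArg Prod.fst hcontra
    simp at this; omega
  have hsub : ({(0, d), (d, 0)} : Finset (ℕ × ℕ)) ⊆ Finset.HasAntidiagonal.antidiagonal d := by
    intro p hp
    simp only [Finset.mem_insert, Finset.mem_singleton] at hp
    rcases hp with rfl | rfl <;> simp [Finset.mem_antidiagonal]
  have hpair : ∑ p ∈ ({(0, d), (d, 0)} : Finset (ℕ × ℕ)),
      ((p.1 : ℝ) - p.2) ^ 2 * P.coeff p.1 * P.coeff p.2
        = 2 * ((d : ℝ) ^ 2 * P.coeff d) := by
    rw [Finset.sum_insert (by simp [hne]), Finset.sum_singleton]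
    simp [h0]
    ring
  have hge : ∑ p ∈ ({(0, d), (d, 0)} : Finset (ℕ × ℕ)),
      ((p.1 : ℝ) - p.2) ^ 2 * P.coeff p.1 * P.coeff p.2
      ≤ ∑ p ∈ Finset.HasAntidiagonal.antidiagonal d, ((p.1 : ℝ) - p.2) ^ 2 * P.coeff p.1 * P.coeff p.2 :=
    Finset.sum_le_sum_of_subset_of_nonneg hsub
      (fun p _ _ => mul_nonneg (mul_nonneg (sq_nonneg _) (h p.1)) (h p.2))
  linarith [h2 ▸ (hpair ▸ hge)]

lemma key_eval_pos (P : ℝ[X]) (h : ∀ n, 0 ≤ P.coeff n) (h0 : P.coeff 0 = 1)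
    (hd : 0 < P.natDegree) {z : ℝ} (hz : 0 < z) :
    0 < ((X * derivative (X * derivative P)) * P
        - (X * derivative P) * (X * derivative P)).eval z := by
  set D := (X * derivative (X * derivative P)) * P
      - (X * derivative P) * (X * derivative P) with hD
  have h1 : D.coeff P.natDegree * z ^ P.natDegree ≤ D.eval z :=
    eval_ge_single D (key_coeff_nonneg P h) hz.le P.natDegree
  have h2 : (P.natDegree : ℝ) ^ 2 * P.coeff P.natDegree ≤ D.coeff P.natDegree :=
    key_coeff_d P h h0 hd
  have hP0 : P ≠ 0 := fun hcontra => by simp [hcontra] at h0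
  have h3 : 0 < P.coeff P.natDegree := by
    rcases (h P.natDegree).lt_or_eq with h' | h'
    · exact h'
    · exact absurd h'.symm
        (by rw [Polynomial.coeff_natDegree]; exact Polynomial.leadingCoeff_ne_zero.2 hP0)
  have h4 : 0 < (P.natDegree : ℝ) ^ 2 := by
    have : (0 : ℝ) < P.natDegree := by exact_mod_cast hd
    positivity
  have h5 := mul_le_mul_of_nonneg_right h2 (pow_pos hz P.natDegree).le
  linarith [mul_pos (mul_pos h4 h3) (pow_pos hz P.natDegree)]

noncomputable def specFD {I : Type*} [Fintype I] (A : I → Polynomial ℝ) (c : I → ℝ)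
    (x : ℝ) : ℝ :=
  ∑ t, c t * ((eval x (derivative (X * derivative (A t))) * eval x (A t)
      - eval x (X * derivative (A t)) * eval x (derivative (A t))) / (eval x (A t)) ^ 2)

lemma specF_eq {I : Type*} [Fintype I] (A : I → Polynomial ℝ) (c : I → ℝ) :
    specF A c = fun z => ∑ t, c t * (eval z (X * derivative (A t)) / eval z (A t)) := by
  funext z
  exact Finset.sum_congr rfl fun t _ => by rw [eval_mul, eval_X]

lemma hasDerivAt_specF {I : Type*} [Fintype I] (A : I → Polynomial ℝ) (c : I → ℝ)
    {x : ℝ} (hA : ∀ t, (A t).eval x ≠ 0) :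
    HasDerivAt (specF A c) (specFD A c x) x := by
  rw [specF_eq]
  exact HasDerivAt.fun_sum fun t _ =>
    (((Polynomial.hasDerivAt (X * derivative (A t)) x).div
      (Polynomial.hasDerivAt (A t) x) (hA t)).const_mul (c t))

lemma specFD_pos {I : Type*} [Fintype I] [Nonempty I] (A : I → Polynomial ℝ) (c : I → ℝ)
    (hnonconst : ∀ t, 0 < (A t).natDegree)
    (hnonneg : ∀ t n, 0 ≤ (A t).coeff n)
    (hconst : ∀ t, (A t).coeff 0 = 1)
    (hc : ∀ t, 0 < c t) {x : ℝ} (hx : 0 < x) :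
    0 < specFD A c x := by
  apply Finset.sum_pos _ Finset.univ_nonempty
  intro t _
  apply mul_pos (hc t)
  have hApos : 0 < eval x (A t) := eval_pos_of_nonneg (A t) (hnonneg t) (hconst t) hx.le
  apply div_pos _ (by positivity)
  have hkey := key_eval_pos (A t) (hnonneg t) (hconst t) (hnonconst t) hx
  have hident : ((X * derivative (X * derivative (A t))) * (A t)
      - (X * derivative (A t)) * (X * derivative (A t))).eval x
      = x * (eval x (derivative (X * derivative (A t))) * eval x (A t)
        - eval x (X * derivative (A t)) * eval x (derivative (A t))) := by
    simp only [eval_sub, eval_mul, eval_X]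
    ring
  rw [hident] at hkey
  rcases mul_pos_iff.mp hkey with ⟨_, hN⟩ | ⟨hx', _⟩
  · exact hN
  · linarith

lemma specF_zero {I : Type*} [Fintype I] (A : I → Polynomial ℝ) (c : I → ℝ) :
    specF A c 0 = 0 := by
  unfold specF; simp

lemma strictMonoOn_specF {I : Type*} [Fintype I] [Nonempty I] (A : I → Polynomial ℝ)
    (c : I → ℝ)
    (hnonconst : ∀ t, 0 < (A t).natDegree)
    (hnonneg : ∀ t n, 0 ≤ (A t).coeff n)
    (hconst : ∀ t, (A t).coeff 0 = 1)
    (hc : ∀ t, 0 < c t) :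
    StrictMonoOn (specF A c) (Set.Ici 0) := by
  have hA : ∀ x : ℝ, 0 ≤ x → ∀ t, (A t).eval x ≠ 0 := fun x hx t =>
    (eval_pos_of_nonneg (A t) (hnonneg t) (hconst t) hx).ne'
  apply strictMonoOn_of_deriv_pos (convex_Ici 0)
  · exact fun x hx =>
      (hasDerivAt_specF A c (hA x hx)).continuousAt.continuousWithinAt
  · intro x hx
    rw [interior_Ici] at hx
    rw [(hasDerivAt_specF A c (hA x hx.le)).deriv]
    exact specFD_pos A c hnonconst hnonneg hconst hc hx

lemma hasDerivAt_binEnt {y : ℝ} (h0 : y ≠ 0) (h1 : y ≠ 1) :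
    HasDerivAt binEnt (Real.log (1 - y) - Real.log y) y := by
  have h1' : (1 : ℝ) - y ≠ 0 := sub_ne_zero.2 (Ne.symm h1)
  have d1 : HasDerivAt (fun α : ℝ => -α * Real.log α) (-Real.log y - 1) y := by
    have := ((hasDerivAt_id y).neg.mul (Real.hasDerivAt_log h0))
    refine this.congr_deriv ?_
    simp only [Pi.neg_apply, id_eq]
    field_simp
    ring
  have du : HasDerivAt (fun α : ℝ => 1 - α) (-1 : ℝ) y := by
    simpa using (hasDerivAt_id y).const_sub 1
  have d2 : HasDerivAt (fun α : ℝ => (1 - α) * Real.log (1 - α))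
      (-Real.log (1 - y) - 1) y := by
    have hlog : HasDerivAt (fun α : ℝ => Real.log (1 - α)) ((1 - y)⁻¹ * (-1)) y :=
      (Real.hasDerivAt_log h1').comp y du
    have := du.mul hlog
    refine this.congr_deriv ?_
    field_simp
    ring
  have := d1.sub d2
  have hfun : binEnt = fun α : ℝ => -α * Real.log α - (1 - α) * Real.log (1 - α) := rfl
  rw [hfun]
  refine this.congr_deriv ?_
  ring

end Aux

noncomputable def specPhi {I : Type*} [Fintype I] (A : I → Polynomial ℝ) (c : I → ℝ)
    (q : ℕ) (x : ℝ) : ℝ :=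
  (1 - (q : ℝ)) * binEnt (specF A c x) - (q : ℝ) * specF A c x * Real.log x
    + (q : ℝ) * ∑ t, c t * Real.log ((A t).eval x)

noncomputable def specPsi {I : Type*} [Fintype I] (A : I → Polynomial ℝ) (c : I → ℝ)
    (q : ℕ) (x : ℝ) : ℝ :=
  (1 - (q : ℝ)) * (Real.log (1 - specF A c x) - Real.log (specF A c x))
    - (q : ℝ) * Real.log x

lemma specPhi_eq_G {I : Type*} [Fintype I] (A : I → Polynomial ℝ) (c : I → ℝ)
    (q : ℕ) (finv : ℝ → ℝ) (α : ℝ) (h : specF A c (finv α) = α) :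
    specPhi A c q (finv α) = specG A c q finv α := by
  unfold specPhi specG
  rw [h]

lemma sum_log_deriv_eq {I : Type*} [Fintype I] (A : I → Polynomial ℝ) (c : I → ℝ)
    {x : ℝ} (hx : x ≠ 0) (hA : ∀ t, (A t).eval x ≠ 0) :
    (∑ t, c t * ((eval x (A t))⁻¹ * eval x (derivative (A t)))) = specF A c x / x := by
  unfold specF
  rw [Finset.sum_div]
  refine Finset.sum_congr rfl fun t _ => ?_
  have h : x * x⁻¹ = 1 := mul_inv_cancel₀ hx
  calc c t * ((eval x (A t))⁻¹ * eval x (derivative (A t)))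
      = c t * (eval x (derivative (A t)) / eval x (A t)) * (x * x⁻¹) := by rw [h]; ring
    _ = c t * (x * eval x (derivative (A t)) / eval x (A t)) / x := by ring

lemma hasDerivAt_specPhi {I : Type*} [Fintype I] (A : I → Polynomial ℝ) (c : I → ℝ)
    (q : ℕ) {x : ℝ} (hx : 0 < x) (hA : ∀ t, (A t).eval x ≠ 0)
    (h0 : 0 < specF A c x) (h1 : specF A c x < 1) :
    HasDerivAt (specPhi A c q) (specFD A c x * specPsi A c q x) x := by
  have hf := hasDerivAt_specF A c hA
  have hb : HasDerivAt binEnt (Real.log (1 - specF A c x) - Real.log (specF A c x))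
      (specF A c x) := hasDerivAt_binEnt h0.ne' (ne_of_lt h1)
  have h₁ : HasDerivAt (fun y => binEnt (specF A c y))
      ((Real.log (1 - specF A c x) - Real.log (specF A c x)) * specFD A c x) x :=
    hb.comp x hf
  have h₂ : HasDerivAt (fun y => specF A c y * Real.log y)
      (specFD A c x * Real.log x + specF A c x * x⁻¹) x :=
    hf.mul (Real.hasDerivAt_log hx.ne')
  have h₃ : HasDerivAt (fun y => ∑ t, c t * Real.log ((A t).eval y))
      (∑ t, c t * ((eval x (A t))⁻¹ * eval x (derivative (A t)))) x :=
    HasDerivAt.fun_sum fun t _ =>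
      ((show HasDerivAt (fun y => Real.log ((A t).eval y))
        ((eval x (A t))⁻¹ * eval x (derivative (A t))) x from
        (by have h := (Real.hasDerivAt_log (hA t)).comp x (Polynomial.hasDerivAt (A t) x); exact h)).const_mul (c t))
  have hcomb := ((h₁.const_mul (1 - (q : ℝ))).sub (h₂.const_mul (q : ℝ))).add
    (h₃.const_mul (q : ℝ))
  have hfun : specPhi A c q = fun y =>
      (1 - (q : ℝ)) * binEnt (specF A c y) - (q : ℝ) * (specF A c y * Real.log y)
        + (q : ℝ) * ∑ t, c t * Real.log ((A t).eval y) := by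
    funext y; unfold specPhi; ring
  rw [hfun]
  refine hcomb.congr_deriv ?_
  rw [sum_log_deriv_eq A c hx.ne' hA]
  unfold specPsi
  field_simp
  ring

lemma sym_pos_case {f Φ ψ fd : ℝ → ℝ} {x0 ε0 : ℝ}
    (hmono : StrictMonoOn f (Set.Ici 0)) (hx0 : 0 < x0) (hε0 : 0 < ε0)
    (hd : ∀ᶠ x in nhds x0, HasDerivAt Φ (fd x * ψ x) x ∧ HasDerivAt f (fd x) x ∧ 0 < fd x)
    (hψcont : ContinuousAt ψ x0) (hψpos : 0 < ψ x0)
    (hmatch : ∀ ε : ℝ, 0 < ε → ε < ε0 →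
      ∃ u v : ℝ, 0 ≤ u ∧ 0 ≤ v ∧ f u = f x0 - ε ∧ f v = f x0 + ε ∧ Φ u = Φ v) : False := by
  have hev : ∀ᶠ x in nhds x0,
      (HasDerivAt Φ (fd x * ψ x) x ∧ HasDerivAt f (fd x) x ∧ 0 < fd x) ∧ 0 < ψ x :=
    hd.and (hψcont.eventually (eventually_gt_nhds hψpos))
  rw [Metric.eventually_nhds_iff] at hev
  obtain ⟨δ₀, hδ₀pos, hball⟩ := hev
  set δ := min (δ₀ / 2) (x0 / 2) with hδ
  have hδpos : 0 < δ := lt_min (by linarith) (by linarith)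
  have hδle : δ ≤ δ₀ / 2 := min_le_left _ _
  have hδle2 : δ ≤ x0 / 2 := min_le_right _ _
  have hsub : ∀ x : ℝ, x0 - δ ≤ x → x ≤ x0 + δ →
      ((HasDerivAt Φ (fd x * ψ x) x ∧ HasDerivAt f (fd x) x ∧ 0 < fd x) ∧ 0 < ψ x) := by
    intro x hx1 hx2
    apply hball
    rw [Real.dist_eq, abs_lt]
    constructor <;> linarith
  have ha0 : (0 : ℝ) ≤ x0 - δ := by linarith
  have hΦmono : StrictMonoOn Φ (Set.Icc (x0 - δ) (x0 + δ)) := by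
    apply strictMonoOn_of_deriv_pos (convex_Icc _ _)
    · exact fun x hx => ((hsub x hx.1 hx.2).1.1).continuousAt.continuousWithinAt
    · intro x hx
      rw [interior_Icc] at hx
      rw [((hsub x hx.1.le hx.2.le).1.1).deriv]
      exact mul_pos (hsub x hx.1.le hx.2.le).1.2.2 (hsub x hx.1.le hx.2.le).2
  have hm1 : f (x0 - δ) < f x0 := hmono ha0 (by simp [Set.mem_Ici]; linarith) (by linarith)
  have hm2 : f x0 < f (x0 + δ) :=
    hmono (by simp [Set.mem_Ici]; linarith) (by simp [Set.mem_Ici]; linarith) (by linarith)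
  set m1 := f x0 - f (x0 - δ) with hm1d
  set m2 := f (x0 + δ) - f x0 with hm2d
  set ε := min (min m1 m2) ε0 / 2 with hε
  have hεpos : 0 < ε := by
    apply div_pos (lt_min (lt_min (by linarith) (by linarith)) hε0)
    norm_num
  have hεmin : min (min m1 m2) ε0 ≤ ε0 := min_le_right _ _
  have hεm1 : min (min m1 m2) ε0 ≤ m1 := le_trans (min_le_left _ _) (min_le_left _ _)
  have hεm2 : min (min m1 m2) ε0 ≤ m2 := le_trans (min_le_left _ _) (min_le_right _ _)
  have hεlt : ε < ε0 := by rw [hε]; linarith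
  obtain ⟨u, v, hu0, hv0, hfu, hfv, hΦuv⟩ := hmatch ε hεpos hεlt
  have hmonoO := hmono.monotoneOn
  have hugt : x0 - δ < u := by
    by_contra hle
    push_neg at hle
    have := hmonoO hu0 ha0 hle
    rw [hfu] at this
    have : ε ≥ m1 := by linarith
    rw [hε] at this
    linarith
  have hult : u < x0 := by
    by_contra hle
    push_neg at hle
    have := hmonoO (by simp [Set.mem_Ici]; linarith) hu0 hle
    rw [hfu] at this
    linarith
  have hvgt : x0 < v := by
    by_contra hle
    push_neg at hle
    have := hmonoO hv0 (by simp [Set.mem_Ici]; linarith) hle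
    rw [hfv] at this
    linarith
  have hvlt : v < x0 + δ := by
    by_contra hle
    push_neg at hle
    have := hmonoO (by simp [Set.mem_Ici]; linarith) hv0 hle
    rw [hfv] at this
    have : ε ≥ m2 := by linarith
    rw [hε] at this
    linarith
  have : Φ u < Φ v := hΦmono ⟨by linarith, by linarith⟩ ⟨by linarith, by linarith⟩
    (by linarith)
  exact absurd hΦuv (ne_of_lt this)

lemma sym_forces_zero {f Φ ψ fd : ℝ → ℝ} {x0 ε0 : ℝ}
    (hmono : StrictMonoOn f (Set.Ici 0)) (hx0 : 0 < x0) (hε0 : 0 < ε0)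
    (hd : ∀ᶠ x in nhds x0, HasDerivAt Φ (fd x * ψ x) x ∧ HasDerivAt f (fd x) x ∧ 0 < fd x)
    (hψcont : ContinuousAt ψ x0)
    (hmatch : ∀ ε : ℝ, 0 < ε → ε < ε0 →
      ∃ u v : ℝ, 0 ≤ u ∧ 0 ≤ v ∧ f u = f x0 - ε ∧ f v = f x0 + ε ∧ Φ u = Φ v) :
    ψ x0 = 0 := by
  by_contra hne
  rcases lt_or_gt_of_ne hne with hneg | hpos
  · refine sym_pos_case (Φ := fun x => -Φ x) (ψ := fun x => -ψ x) (fd := fd)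
      hmono hx0 hε0 ?_ hψcont.neg (by simpa using hneg) ?_
    · refine hd.mono fun x hx => ⟨?_, hx.2.1, hx.2.2⟩
      have := hx.1.neg
      refine this.congr_deriv ?_
      ring
    · intro ε hε1 hε2
      obtain ⟨u, v, h1, h2, h3, h4, h5⟩ := hmatch ε hε1 hε2
      exact ⟨u, v, h1, h2, h3, h4, by simp [h5]⟩
  · exact sym_pos_case hmono hx0 hε0 hd hψcont hpos hmatch

/-- necessary condition for symmetry: if `G(M−α) = G(α)` for all
`α ∈ (0,M)`, then `M = 2 f((M/(2−M))^{(q−1)/q})`; equivalently,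
`q log f⁻¹(M/2) = (1−q) log((2−M)/M)`. -/

theorem specG_symmetry_necessary {I : Type*} [Fintype I] [Nonempty I]
    (A : I → Polynomial ℝ) (c : I → ℝ)
    (hnonconst : ∀ t, 0 < (A t).natDegree)
    (hnonneg : ∀ t n, 0 ≤ (A t).coeff n)
    (hconst : ∀ t, (A t).coeff 0 = 1)
    (hdeg1 : ∀ t, (A t).coeff 1 = 0)
    (hc : ∀ t, 0 < c t)
    (hM : specM A c ≤ 1)
    (finv : ℝ → ℝ)
    (hfinv : ∀ α : ℝ, 0 ≤ α → α < specM A c →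
      0 ≤ finv α ∧ specF A c (finv α) = α)
    (q : ℕ) (hq : 2 ≤ q)
    (hGsym : ∀ α : ℝ, 0 < α → α < specM A c →
      specG A c q finv (specM A c - α) = specG A c q finv α) :
    specM A c =
        2 * specF A c ((specM A c / (2 - specM A c)) ^ (((q : ℝ) - 1) / (q : ℝ))) ∧
      (q : ℝ) * Real.log (finv (specM A c / 2)) =
        (1 - (q : ℝ)) * Real.log ((2 - specM A c) / specM A c) := by
  have hAne : ∀ (x : ℝ), 0 ≤ x → ∀ t, (A t).eval x ≠ 0 := fun x hx t =>
    (eval_pos_of_nonneg (A t) (hnonneg t) (hconst t) hx).ne'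
  have hMpos : 0 < specM A c := by
    unfold specM
    apply Finset.sum_pos _ Finset.univ_nonempty
    intro t _
    exact mul_pos (hc t) (by exact_mod_cast hnonconst t)
  set M := specM A c with hMdef
  obtain ⟨hx0nonneg, hx0f⟩ := hfinv (M / 2) (by linarith) (by linarith)
  set x0 := finv (M / 2) with hx0def
  have hx0pos : 0 < x0 := by
    rcases hx0nonneg.lt_or_eq with h | h
    · exact h
    · exfalso
      rw [← h, specF_zero] at hx0f
      linarith
  have hmono := strictMonoOn_specF A c hnonconst hnonneg hconst hc
  have hfc : ContinuousAt (specF A c) x0 :=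
    (hasDerivAt_specF A c (hAne x0 hx0pos.le)).continuousAt
  have e1 : ∀ᶠ x in nhds x0, 0 < x := eventually_gt_nhds hx0pos
  have e2 : ∀ᶠ x in nhds x0, 0 < specF A c x :=
    hfc.eventually (eventually_gt_nhds (by rw [hx0f]; linarith))
  have e3 : ∀ᶠ x in nhds x0, specF A c x < 1 :=
    hfc.eventually (eventually_lt_nhds (by rw [hx0f]; linarith))
  have hd : ∀ᶠ x in nhds x0, HasDerivAt (specPhi A c q) (specFD A c x * specPsi A c q x) x
      ∧ HasDerivAt (specF A c) (specFD A c x) x ∧ 0 < specFD A c x := by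
    filter_upwards [e1, e2, e3] with x h1 h2 h3
    exact ⟨hasDerivAt_specPhi A c q h1 (hAne x h1.le) h2 h3,
      hasDerivAt_specF A c (hAne x h1.le),
      specFD_pos A c hnonconst hnonneg hconst hc h1⟩
  have hne1 : (1 : ℝ) - specF A c x0 ≠ 0 := by
    rw [hx0f]; intro h; linarith [(by linarith : M / 2 < 1)]
  have hne2 : specF A c x0 ≠ 0 := by
    rw [hx0f]; positivity
  have hψcont : ContinuousAt (specPsi A c q) x0 := by
    unfold specPsi
    apply ContinuousAt.sub
    · exact continuousAt_const.mul
        (((continuousAt_const.sub hfc).log hne1).sub (hfc.log hne2))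
    · exact continuousAt_const.mul (Real.continuousAt_log hx0pos.ne')
  have hψ0 : specPsi A c q x0 = 0 := by
    apply sym_forces_zero hmono hx0pos (show (0 : ℝ) < M / 2 by linarith) hd hψcont
    intro ε hε1 hε2
    obtain ⟨hu0, hfu⟩ := hfinv (M / 2 - ε) (by linarith) (by linarith)
    obtain ⟨hv0, hfv⟩ := hfinv (M / 2 + ε) (by linarith) (by linarith)
    refine ⟨finv (M / 2 - ε), finv (M / 2 + ε), hu0, hv0,
      by rw [hfu, hx0f], by rw [hfv, hx0f], ?_⟩
    rw [specPhi_eq_G A c q finv _ hfu, specPhi_eq_G A c q finv _ hfv]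
    have hsym := hGsym (M / 2 - ε) (by linarith) (by linarith)
    have harg : M - (M / 2 - ε) = M / 2 + ε := by ring
    rw [harg] at hsym
    exact hsym.symm
  unfold specPsi at hψ0
  rw [hx0f] at hψ0
  have h2M : (0 : ℝ) < 2 - M := by linarith
  have hL : Real.log ((2 - M) / M) = Real.log (1 - M / 2) - Real.log (M / 2) := by
    rw [show (1 : ℝ) - M / 2 = (2 - M) / 2 by ring,
      Real.log_div h2M.ne' (two_ne_zero), Real.log_div hMpos.ne' (two_ne_zero),
      Real.log_div h2M.ne' hMpos.ne']
    ring
  have conc2 : (q : ℝ) * Real.log x0 = (1 - (q : ℝ)) * Real.log ((2 - M) / M) := by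
    rw [hL]; linarith
  have hqpos : (0 : ℝ) < (q : ℝ) := by
    have : 0 < q := lt_of_lt_of_le two_pos hq
    exact_mod_cast this
  have hrpos : 0 < M / (2 - M) := div_pos hMpos h2M
  have hlogr : Real.log (M / (2 - M)) = -Real.log ((2 - M) / M) := by
    rw [Real.log_div hMpos.ne' h2M.ne', Real.log_div h2M.ne' hMpos.ne']
    ring
  have hlogx0 : Real.log x0 = ((q : ℝ) - 1) / (q : ℝ) * Real.log (M / (2 - M)) := by
    rw [hlogr]
    field_simp
    linear_combination conc2
  have hx0eq : x0 = (M / (2 - M)) ^ (((q : ℝ) - 1) / (q : ℝ)) := by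
    rw [Real.rpow_def_of_pos hrpos, mul_comm, ← hlogx0, Real.exp_log hx0pos]
  constructor
  · rw [← hx0eq, hx0f]; ring
  · exact conc2
end

section
/- Let I be a finite nonempty index set. For each t in I let A_t(z) = 1 + Σ_{u=r_t}^{s_t} a_{t,u} z^u be a real polynomial with nonnegative coefficients, constant term 1, r_t ≥ 2, and a_{t, r_t} > 0, and let c_t > 0. Define f(z) = Σ_{t∈I} c_t · z A_t'(z)/A_t(z), M = Σ_{t∈I} c_t · deg(A_t), and let f^{-1} : [0, M) → [0, ∞) be the inverse of f. Let r = min_{t∈I} r_t, X = { t ∈ I : r_t = r }, and K = Σ_{t∈X} c_t a_{t,r} > 0. Then f^{-1}(α) → 0 as α → 0+, and lim_{α→0+} f^{-1}(α)^r / α = 1/(r K). -/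
open Polynomial Finset Filter Topology

private lemma eval_nonneg_of_coeff_nonneg (p : Polynomial ℝ) (h : ∀ n, 0 ≤ p.coeff n)
    {z : ℝ} (hz : 0 ≤ z) : 0 ≤ p.eval z := by
  rw [p.eval_eq_sum_range]
  exact Finset.sum_nonneg fun i _ => mul_nonneg (h i) (pow_nonneg hz i)

private lemma eval_mono (p : Polynomial ℝ) (h : ∀ n, 0 ≤ p.coeff n)
    {x y : ℝ} (hx : 0 ≤ x) (hxy : x ≤ y) : p.eval x ≤ p.eval y := by
  rw [p.eval_eq_sum_range, p.eval_eq_sum_range]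
  exact Finset.sum_le_sum fun i _ =>
    mul_le_mul_of_nonneg_left (pow_le_pow_left₀ hx hxy i) (h i)

private lemma one_add_le_eval (p : Polynomial ℝ) (k : ℕ) (hk : k ≠ 0)
    (h0 : p.coeff 0 = 1) (hnn : ∀ n, 0 ≤ p.coeff n) (hkd : k ≤ p.natDegree)
    {z : ℝ} (hz : 0 ≤ z) : 1 + p.coeff k * z ^ k ≤ p.eval z := by
  rw [p.eval_eq_sum_range]
  have hsub : ({0, k} : Finset ℕ) ⊆ Finset.range (p.natDegree + 1) := by
    intro i hi
    simp only [Finset.mem_insert, Finset.mem_singleton] at hi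
    rcases hi with rfl | rfl
    · simp
    · exact Finset.mem_range.mpr (Nat.lt_succ_of_le hkd)
  calc 1 + p.coeff k * z ^ k = ∑ i ∈ ({0, k} : Finset ℕ), p.coeff i * z ^ i := by
        rw [Finset.sum_pair (Ne.symm hk)]
        simp [h0]
      _ ≤ _ := Finset.sum_le_sum_of_subset_of_nonneg hsub
        fun i _ _ => mul_nonneg (hnn i) (pow_nonneg hz i)

private lemma eval_sub_one_le (p : Polynomial ℝ) (h0 : p.coeff 0 = 1)
    (hnn : ∀ n, 0 ≤ p.coeff n) (hd : p.natDegree ≠ 0) {z : ℝ} (hz : 0 ≤ z) :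
    p.eval z - 1 ≤ z * (Polynomial.derivative p).eval z := by
  rw [(Polynomial.derivative p).eval_eq_sum_range' (Polynomial.natDegree_derivative_lt hd) z,
      p.eval_eq_sum_range, Finset.sum_range_succ', Finset.mul_sum]
  simp only [pow_zero, mul_one, h0, add_sub_cancel_right]
  refine Finset.sum_le_sum fun i _ => ?_
  rw [Polynomial.coeff_derivative]
  have h1 : z * (p.coeff (i + 1) * (↑i + 1) * z ^ i) = p.coeff (i + 1) * ((↑i : ℝ) + 1) * z ^ (i + 1) := by
    ring
  rw [h1]
  have h2 : p.coeff (i + 1) ≤ p.coeff (i + 1) * ((i : ℝ) + 1) :=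
    le_mul_of_one_le_right (hnn _) (by linarith [(Nat.cast_nonneg i : (0:ℝ) ≤ i)])
  exact mul_le_mul_of_nonneg_right h2 (pow_nonneg hz _)

private lemma tendsto_eval_div_pow (p : Polynomial ℝ) (m : ℕ)
    (h : ∀ n, n < m → p.coeff n = 0) :
    Tendsto (fun z => p.eval z / z ^ m) (𝓝[>] (0:ℝ)) (𝓝 (p.coeff m)) := by
  set N := max (p.natDegree + 1) (m + 1) with hN
  have hdeg : p.natDegree < N := lt_of_lt_of_le (Nat.lt_succ_self _) (le_max_left _ _)
  have hmN : m ∈ Finset.range N := Finset.mem_range.mpr (lt_of_lt_of_le (Nat.lt_succ_self _) (le_max_right _ _))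
  have hterm : ∀ i ∈ Finset.range N,
      Tendsto (fun z : ℝ => p.coeff i * z ^ i / z ^ m) (𝓝[>] (0:ℝ))
        (𝓝 (if i = m then p.coeff m else 0)) := by
    intro i _
    by_cases hci : p.coeff i = 0
    · have : (if i = m then p.coeff m else 0) = 0 := by
        split <;> simp_all
      rw [this, hci]
      simpa using tendsto_const_nhds
    · have hmi : m ≤ i := by
        by_contra hlt
        exact hci (h i (not_le.mp hlt))
      have hlim : Tendsto (fun z : ℝ => p.coeff i * z ^ (i - m)) (𝓝[>] (0:ℝ))
          (𝓝 (p.coeff i * (0:ℝ) ^ (i - m))) :=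
        (((continuous_pow (i - m)).tendsto 0).const_mul _).mono_left nhdsWithin_le_nhds
      have heq : ∀ᶠ z in 𝓝[>] (0:ℝ), p.coeff i * z ^ (i - m) = p.coeff i * z ^ i / z ^ m := by
        filter_upwards [self_mem_nhdsWithin] with z hz
        have hz0 : z ≠ 0 := ne_of_gt hz
        rw [mul_div_assoc, div_eq_mul_inv, ← pow_sub₀ z hz0 hmi]
      have := hlim.congr' heq
      convert this using 2
      rcases eq_or_ne i m with rfl | hne
      · simp
      · have : 0 < i - m := Nat.sub_pos_of_lt (lt_of_le_of_ne hmi (Ne.symm hne))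
        rw [if_neg hne, zero_pow this.ne', mul_zero]
  have hsum := tendsto_finset_sum (Finset.range N) hterm
  have hval : (∑ i ∈ Finset.range N, if i = m then p.coeff m else 0) = p.coeff m := by
    rw [Finset.sum_ite_eq' (Finset.range N) m (fun _ => p.coeff m), if_pos hmN]
  rw [hval] at hsum
  refine hsum.congr' ?_
  filter_upwards [self_mem_nhdsWithin] with z hz
  rw [p.eval_eq_sum_range' hdeg, Finset.sum_div]

/-- with `r = min_t r_t` and `K = Σ_{t : r_t = r} c_t a_{t,r}`, the inverse
function satisfies `f⁻¹(α) → 0` and `f⁻¹(α)^r / α → 1/(rK)` as `α → 0⁺`. -/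
theorem specFinv_asymptotics {I : Type*} [Fintype I] [Nonempty I]
    (A : I → Polynomial ℝ) (c : I → ℝ)
    (r : I → ℕ) (hr2 : ∀ t, 2 ≤ r t)
    (hnonneg : ∀ t n, 0 ≤ (A t).coeff n)
    (hconst : ∀ t, (A t).coeff 0 = 1)
    (hgap : ∀ t, ∀ u : ℕ, 0 < u → u < r t → (A t).coeff u = 0)
    (hlead : ∀ t, 0 < (A t).coeff (r t))
    (hc : ∀ t, 0 < c t)
    (rm : ℕ) (hrm_le : ∀ t, rm ≤ r t) (hrm_mem : ∃ t, r t = rm)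
    (finv : ℝ → ℝ)
    (hfinv : ∀ α : ℝ, 0 ≤ α → α < specM A c →
      0 ≤ finv α ∧ specF A c (finv α) = α) :
    Tendsto finv (𝓝[>] (0 : ℝ)) (𝓝 0) ∧
      Tendsto (fun α : ℝ => (finv α) ^ rm / α) (𝓝[>] (0 : ℝ))
        (𝓝 (1 / ((rm : ℝ) *
          ∑ t ∈ Finset.univ.filter (fun t => r t = rm), c t * (A t).coeff rm))) := by
  obtain ⟨t0, ht0⟩ := hrm_mem
  have hrm2 : 2 ≤ rm := ht0 ▸ hr2 t0
  have hdeg : ∀ t, r t ≤ (A t).natDegree := fun t =>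
    Polynomial.le_natDegree_of_ne_zero (ne_of_gt (hlead t))
  have hdeg0 : ∀ t, (A t).natDegree ≠ 0 := fun t => by
    have h1 := hr2 t; have h2 := hdeg t; omega
  have hDnn : ∀ t n, 0 ≤ (Polynomial.derivative (A t)).coeff n := fun t n => by
    rw [Polynomial.coeff_derivative]
    exact mul_nonneg (hnonneg t _) (by positivity)
  have hM : 0 < specM A c := by
    apply Finset.sum_pos
    · intro t _
      have h1 : (0:ℝ) < ((A t).natDegree : ℝ) := by
        exact_mod_cast Nat.pos_of_ne_zero (hdeg0 t)
      exact mul_pos (hc t) h1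
    · exact Finset.univ_nonempty
  have heval_ge : ∀ t, ∀ z : ℝ, 0 ≤ z → (1:ℝ) ≤ (A t).eval z := by
    intro t z hz
    have h := one_add_le_eval (A t) (r t) (by have := hr2 t; omega) (hconst t)
      (hnonneg t) (hdeg t) hz
    nlinarith [mul_nonneg (le_of_lt (hlead t)) (pow_nonneg hz (r t))]
  have hterm_nonneg : ∀ t, ∀ z : ℝ, 0 ≤ z →
      0 ≤ c t * (z * (Polynomial.derivative (A t)).eval z / (A t).eval z) := by
    intro t z hz
    exact mul_nonneg (hc t).le (div_nonneg
      (mul_nonneg hz (eval_nonneg_of_coeff_nonneg _ (hDnn t) hz))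
      (by linarith [heval_ge t z hz]))
  -- lower bound for specF on [δ, ∞)
  have hFlow : ∀ δ : ℝ, 0 < δ → ∀ z : ℝ, δ ≤ z →
      c t0 * (1 - 1 / (A t0).eval δ) ≤ specF A c z := by
    intro δ hδ z hz
    have hz0 : (0:ℝ) ≤ z := le_trans hδ.le hz
    have hAz : (1:ℝ) ≤ (A t0).eval z := heval_ge t0 z hz0
    have hAδ : (1:ℝ) ≤ (A t0).eval δ := heval_ge t0 δ hδ.le
    have hmono : (A t0).eval δ ≤ (A t0).eval z := eval_mono _ (hnonneg t0) hδ.le hz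
    have hD := eval_sub_one_le (A t0) (hconst t0) (hnonneg t0) (hdeg0 t0) hz0
    have e1 : 1 - 1 / (A t0).eval δ ≤ 1 - 1 / (A t0).eval z := by
      have := one_div_le_one_div_of_le (by linarith : (0:ℝ) < (A t0).eval δ) hmono
      linarith
    have e2 : 1 - 1 / (A t0).eval z = ((A t0).eval z - 1) / (A t0).eval z := by
      field_simp
    have e3 : ((A t0).eval z - 1) / (A t0).eval z
        ≤ z * (Polynomial.derivative (A t0)).eval z / (A t0).eval z :=
      by rw [div_eq_mul_inv, div_eq_mul_inv]
         exact mul_le_mul_of_nonneg_right hD (inv_nonneg.mpr (by linarith))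
    have h1 : c t0 * (1 - 1 / (A t0).eval δ)
        ≤ c t0 * (z * (Polynomial.derivative (A t0)).eval z / (A t0).eval z) := by
      apply mul_le_mul_of_nonneg_left _ (hc t0).le
      linarith
    exact le_trans h1 (Finset.single_le_sum (fun t _ => hterm_nonneg t z hz0)
      (Finset.mem_univ t0))
  have hεpos : ∀ δ : ℝ, 0 < δ → 0 < c t0 * (1 - 1 / (A t0).eval δ) := by
    intro δ hδ
    have h := one_add_le_eval (A t0) (r t0) (by have := hr2 t0; omega) (hconst t0)
      (hnonneg t0) (hdeg t0) hδ.le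
    have h1 : 1 < (A t0).eval δ := by
      nlinarith [mul_pos (hlead t0) (pow_pos hδ (r t0))]
    have h2 : 1 / (A t0).eval δ < 1 := by
      rw [div_lt_one (by linarith)]; linarith
    exact mul_pos (hc t0) (by linarith)
  -- Part 1
  have part1 : Tendsto finv (𝓝[>] (0 : ℝ)) (𝓝 0) := by
    rw [Metric.tendsto_nhdsWithin_nhds]
    intro ε hε
    set E := c t0 * (1 - 1 / (A t0).eval (ε / 2)) with hE
    refine ⟨min E (specM A c), lt_min (hεpos _ (by linarith)) hM, ?_⟩
    intro α hα hdist
    have hα0 : (0:ℝ) < α := hα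
    rw [Real.dist_eq, sub_zero, abs_of_pos hα0] at hdist
    have hαE : α < E := lt_of_lt_of_le hdist (min_le_left _ _)
    have hαM : α < specM A c := lt_of_lt_of_le hdist (min_le_right _ _)
    obtain ⟨hf0, hfeq⟩ := hfinv α hα0.le hαM
    rw [Real.dist_eq, sub_zero, abs_of_nonneg hf0]
    by_contra hcon
    push_neg at hcon
    have h := hFlow (ε / 2) (by linarith) (finv α) (by linarith)
    rw [hfeq] at h
    linarith
  refine ⟨part1, ?_⟩
  -- Part 2: limit of specF z / z^rm
  have hnum : ∀ t, Tendsto (fun z : ℝ => z * (Polynomial.derivative (A t)).eval z / z ^ rm)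
      (𝓝[>] (0:ℝ)) (𝓝 ((rm : ℝ) * (A t).coeff rm)) := by
    intro t
    have hco : ∀ n, n < rm → (X * Polynomial.derivative (A t)).coeff n = 0 := by
      intro n hn
      cases n with
      | zero => rw [Polynomial.coeff_zero_eq_eval_zero]; simp
      | succ k =>
        rw [Polynomial.coeff_X_mul, Polynomial.coeff_derivative,
          hgap t (k + 1) (Nat.succ_pos k) (lt_of_lt_of_le hn (hrm_le t)), zero_mul]
    have h := tendsto_eval_div_pow (X * Polynomial.derivative (A t)) rm hco
    have hcm : (X * Polynomial.derivative (A t)).coeff rm = (rm : ℝ) * (A t).coeff rm := by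
      obtain ⟨k, rfl⟩ : ∃ k, rm = k + 1 := ⟨rm - 1, by omega⟩
      rw [Polynomial.coeff_X_mul, Polynomial.coeff_derivative]
      push_cast; ring
    rw [hcm] at h
    exact h.congr (fun z => by simp)
  have hden : ∀ t, Tendsto (fun z : ℝ => (A t).eval z) (𝓝[>] (0:ℝ)) (𝓝 1) := by
    intro t
    have h := ((A t).continuous.tendsto 0).mono_left (nhdsWithin_le_nhds (s := Set.Ioi (0:ℝ)))
    rwa [show (A t).eval 0 = 1 by
      rw [← Polynomial.coeff_zero_eq_eval_zero]; exact hconst t] at h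
  have htermlim : ∀ t, Tendsto
      (fun z : ℝ => c t * (z * (Polynomial.derivative (A t)).eval z / (A t).eval z) / z ^ rm)
      (𝓝[>] (0:ℝ)) (𝓝 (c t * ((rm : ℝ) * (A t).coeff rm))) := by
    intro t
    have h := (((hnum t).div (hden t) one_ne_zero).const_mul (c t))
    simp only [div_one] at h
    exact h.congr (fun z => by simp only [Pi.div_apply]; ring)
  have hGlim : Tendsto (fun z : ℝ => specF A c z / z ^ rm) (𝓝[>] (0:ℝ))
      (𝓝 (∑ t, c t * ((rm : ℝ) * (A t).coeff rm))) := by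
    have h := tendsto_finset_sum Finset.univ (fun t (_ : t ∈ Finset.univ) => htermlim t)
    exact h.congr (fun z => by rw [specF, Finset.sum_div])
  have hK : (∑ t, c t * ((rm : ℝ) * (A t).coeff rm))
      = (rm : ℝ) * ∑ t ∈ Finset.univ.filter (fun t => r t = rm), c t * (A t).coeff rm := by
    have h1 : ∀ t, c t * ((rm : ℝ) * (A t).coeff rm) = (rm : ℝ) * (c t * (A t).coeff rm) :=
      fun t => by ring
    simp only [h1]
    rw [← Finset.mul_sum]
    congr 1
    refine (Finset.sum_filter_of_ne ?_).symm
    intro t _ hne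
    by_contra hne2
    have hlt : rm < r t := lt_of_le_of_ne (hrm_le t) (Ne.symm hne2)
    rw [hgap t rm (by omega) hlt, mul_zero] at hne
    exact hne rfl
  have hKpos : 0 < ∑ t ∈ Finset.univ.filter (fun t => r t = rm), c t * (A t).coeff rm := by
    apply Finset.sum_pos
    · intro t ht
      rw [Finset.mem_filter] at ht
      have h := hlead t
      rw [ht.2] at h
      exact mul_pos (hc t) h
    · exact ⟨t0, Finset.mem_filter.mpr ⟨Finset.mem_univ t0, ht0⟩⟩
  have hL0 : (∑ t, c t * ((rm : ℝ) * (A t).coeff rm)) ≠ 0 := by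
    rw [hK]
    exact ne_of_gt (mul_pos (by positivity) hKpos)
  have hmem : ∀ᶠ α in 𝓝[>] (0:ℝ), finv α ∈ Set.Ioi (0:ℝ) := by
    filter_upwards [Ioo_mem_nhdsGT_of_mem ⟨le_refl (0:ℝ), hM⟩] with α hα
    obtain ⟨hf0, hfeq⟩ := hfinv α hα.1.le hα.2
    rcases eq_or_lt_of_le hf0 with heq | hlt
    · exfalso
      rw [← heq] at hfeq
      have h0 : specF A c 0 = 0 := by simp [specF]
      rw [h0] at hfeq
      linarith [hα.1]
    · exact hlt
  have h2 : Tendsto finv (𝓝[>] (0:ℝ)) (𝓝[>] (0:ℝ)) :=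
    tendsto_nhdsWithin_iff.mpr ⟨part1, hmem⟩
  have hcomp := (hGlim.comp h2).inv₀ hL0
  have hconst2 : (1 / ((rm : ℝ) *
      ∑ t ∈ Finset.univ.filter (fun t => r t = rm), c t * (A t).coeff rm))
      = (∑ t, c t * ((rm : ℝ) * (A t).coeff rm))⁻¹ := by
    rw [hK, one_div]
  rw [hconst2]
  refine hcomp.congr' ?_
  filter_upwards [Ioo_mem_nhdsGT_of_mem ⟨le_refl (0:ℝ), hM⟩] with α hα
  obtain ⟨hf0, hfeq⟩ := hfinv α hα.1.le hα.2
  simp only [Function.comp_apply]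
  rw [hfeq, inv_div]
end
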